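/- arXiv:2303.14902 — 6 statements merged into one kernel-verified Lean document; each statement's English description precedes it below -/
import Mathlib

section
/- Let K be an algebraically closed field of characteristic 2, let V be an n-dimensional K-vector space with n ≥ 1, and let u be a unipotent endomorphism of V with a single Jordan block of size n, i.e. (u − 1)^{n−1} ≠ 0 and (u − 1)^{n} = 0. Let ũ denote the induced map on the symmetric square S²(V). Then dim ker(ũ − 1) = ⌊n/2⌋ + 1; equivalently, the number of Jordan blocks of ũ on S²(V) is ⌊n/2⌋ + 1. -/
open scoped TensorProduct

/-- The symmetric square `S²(V)`: the quotient of `V ⊗ V` by the span of all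
`x ⊗ y - y ⊗ x`. -/
noncomputable abbrev SymSq (K V : Type*) [Field K] [AddCommGroup V] [Module K V] : Type _ :=
  TensorProduct K V V ⧸
    Submodule.span K {z : TensorProduct K V V | ∃ x y : V, z = x ⊗ₜ[K] y - y ⊗ₜ[K] x}

/-- The product `xy` in the symmetric square, i.e. the image of `x ⊗ y`. -/
noncomputable def SymSq.mul {K V : Type*} [Field K] [AddCommGroup V] [Module K V]
    (x y : V) : SymSq K V :=
  Submodule.Quotient.mk (x ⊗ₜ[K] y)


/-!
Choose a basis `e 0, …, e (n-1)` of `V` with `(u - 1) (e i) = e (i - 1)` and `(u - 1) (e 0) = 0`,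
and write `z ∈ S²(V)` as `∑_{p ≤ q} Z p q • e p * e q`. In characteristic two, `ũ z = z` becomes
the recursion `Z p (q+1) = Z (p+1) q + Z (p+1) (q+1)` (the first term only for `p + 1 < q`), with
`Z p q = 0` once `q ≥ n`. Solving it from the bottom row up gives
`Z i j = ∑ k, Z k k * choose (k-1-i) (j-k)`, and the equation in the last column then forces
`Z k k = 0` whenever `2k > n`. Conversely, for `2k ≤ n` these binomial coefficients solve the
recursion, so a fixed point is determined by, and may take any values of, its diagonal
coordinates `Z k k` with `2k ≤ n`: there are `⌊n/2⌋ + 1` of them.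
-/

open Module

namespace Module.Basis

variable {K V : Type*} [Field K] [AddCommGroup V] [Module K V] {n : ℕ}

noncomputable def natCoord (b : Basis (Fin n) K V) (p : ℕ) : V →ₗ[K] K :=
  if h : p < n then b.coord ⟨p, h⟩ else 0

theorem natCoord_of_le (b : Basis (Fin n) K V) {p : ℕ} (hp : n ≤ p) : b.natCoord p = 0 :=
  dif_neg (by omega)

theorem natCoord_basis (b : Basis (Fin n) K V) (p : ℕ) (i : Fin n) :
    b.natCoord p (b i) = if p = i then 1 else 0 := by
  unfold natCoord
  split_ifs with hp hpi hpi
  · simp [hpi]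
  · simp [Fin.ext_iff, Ne.symm hpi]
  · omega
  · rfl

end Module.Basis

namespace Module.End

variable {K V : Type*} [Field K] [AddCommGroup V] [Module K V]

theorem linearIndependent_pow_apply {N : Module.End K V} {n : ℕ} {v : V} (hN : N ^ n = 0)
    (hv : (N ^ (n - 1)) v ≠ 0) : LinearIndependent K fun i : Fin n => (N ^ (i : ℕ)) v := by
  rw [Fintype.linearIndependent_iff]
  intro g hg i
  induction i using WellFoundedLT.induction with
  | _ i ih =>
    have key : (N ^ (n - 1 - i)) (∑ j, g j • (N ^ (j : ℕ)) v) = g i • (N ^ (n - 1)) v := by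
      rw [map_sum, Finset.sum_eq_single i]
      · rw [map_smul, ← Module.End.mul_apply, ← pow_add, Nat.sub_add_cancel (by omega)]
      · intro j _ hji
        rcases lt_or_gt_of_ne hji with hlt | hgt
        · rw [ih j hlt, zero_smul, map_zero]
        · rw [map_smul, ← Module.End.mul_apply, ← pow_add,
            show n - 1 - i + j = n + (j - i - 1) by omega, pow_add, hN, zero_mul,
            LinearMap.zero_apply, smul_zero]
      · simp
    rw [hg, map_zero] at key
    exact (smul_eq_zero.mp key.symm).resolve_right hv

theorem exists_basis_natCoord_comp {N : Module.End K V} {n : ℕ} (hn : 1 ≤ n)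
    (hdim : finrank K V = n) (hN : N ^ n = 0) (hN' : N ^ (n - 1) ≠ 0) :
    ∃ b : Basis (Fin n) K V, ∀ p, b.natCoord p ∘ₗ N = b.natCoord (p + 1) := by
  obtain ⟨v, hv⟩ : ∃ v, (N ^ (n - 1)) v ≠ 0 := by
    by_contra! h
    exact hN' (LinearMap.ext h)
  have : Nonempty (Fin n) := ⟨⟨0, hn⟩⟩
  let b := basisOfLinearIndependentOfCardEqFinrank
    ((linearIndependent_pow_apply hN hv).comp Fin.rev Fin.rev_injective)
    (by rw [Fintype.card_fin, hdim])
  have hb (i : Fin n) : b i = (N ^ (n - (i + 1))) v := by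
    simp only [b, coe_basisOfLinearIndependentOfCardEqFinrank, Function.comp_apply, Fin.val_rev]
  refine ⟨b, fun p => b.ext fun i => ?_⟩
  rw [LinearMap.comp_apply, b.natCoord_basis, hb, ← Module.End.mul_apply, ← pow_succ']
  obtain ⟨_ | i, hi⟩ := i
  · rw [show n - (0 + 1) + 1 = n by omega, hN, LinearMap.zero_apply, map_zero, if_neg (by simp)]
  · rw [show n - (i + 1 + 1) + 1 = n - (i + 1) by omega, ← hb ⟨i, by omega⟩, b.natCoord_basis]
    simp

end Module.End

/-- For `2 * k ≤ n`, the coordinates `Z i j` (`i ≤ j`) of the fixed point whose only nonzero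
diagonal coordinate is `Z k k = 1`. -/
def fixedCoeff (k i j : ℕ) : ℕ :=
  if k ≤ j then (k - 1 - i).choose (j - k) else 0

theorem fixedCoeff_self (k i : ℕ) : fixedCoeff k i i = if k = i then 1 else 0 := by
  unfold fixedCoeff
  split_ifs with h₁ h₂ <;> first | omega | skip
  · subst h₂
    simp
  · exact Nat.choose_eq_zero_of_lt (by omega)

theorem fixedCoeff_eq_zero {k i j : ℕ} (hij : i < j) (h : 2 * k < i + j + 1) :
    fixedCoeff k i j = 0 := by
  unfold fixedCoeff
  split_ifs
  · exact Nat.choose_eq_zero_of_lt (by omega)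
  · rfl

theorem fixedCoeff_eq_one {k i j : ℕ} (hij : i < j) (h : 2 * k = i + j + 1) :
    fixedCoeff k i j = 1 := by
  rw [fixedCoeff, if_pos (by omega), show k - 1 - i = j - k by omega, Nat.choose_self]

theorem fixedCoeff_pascal (k : ℕ) {i j : ℕ} (hij : i ≤ j) :
    (if i + 1 < j then fixedCoeff k (i + 1) j else 0) + fixedCoeff k (i + 1) (j + 1) =
      fixedCoeff k i (j + 1) := by
  unfold fixedCoeff
  by_cases hk : i + 1 < k
  · split_ifs <;> first | omega | skip
    · rw [show k - 1 - i = k - 1 - (i + 1) + 1 by omega, show j + 1 - k = j - k + 1 by omega,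
        Nat.choose_succ_succ]
    all_goals simp [show j + 1 - k = 0 by omega]
  · rw [show k - 1 - i = 0 by omega, show k - 1 - (i + 1) = 0 by omega]
    split_ifs <;> first | omega | simp [Nat.choose_eq_zero_of_lt (show 0 < j - k by omega)]

/-- The fixed-point equations of `ũ` in the coordinates `Z p q` (`p ≤ q`) of a Jordan basis, in
characteristic two; the entries with `p > q` play no role. -/
structure IsFixedCoords {R : Type*} [CommSemiring R] (n : ℕ) (Z : ℕ → ℕ → R) : Prop where
  eq_zero : ∀ p q, p ≤ q → n ≤ q → Z p q = 0
  succ_right : ∀ p q, p ≤ q →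
    Z p (q + 1) = (if p + 1 < q then Z (p + 1) q else 0) + Z (p + 1) (q + 1)

namespace IsFixedCoords

variable {R : Type*} [CommSemiring R] {n : ℕ} {Z : ℕ → ℕ → R}

theorem congr (h : IsFixedCoords n Z) {Z' : ℕ → ℕ → R} (hZ : ∀ p q, p ≤ q → Z p q = Z' p q) :
    IsFixedCoords n Z' where
  eq_zero p q hpq hq := hZ p q hpq ▸ h.eq_zero p q hpq hq
  succ_right p q hpq := by
    rw [← hZ p (q + 1) (by omega), h.succ_right p q hpq, ← hZ (p + 1) (q + 1) (by omega)]
    split_ifs with h'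
    · rw [hZ _ _ h'.le]
    · rfl

theorem eq_sum_diag (h : IsFixedCoords n Z) {i j : ℕ} (hij : i ≤ j) :
    Z i j = ∑ k ∈ Finset.range n, Z k k * fixedCoeff k i j := by
  induction hm : n - i using Nat.strong_induction_on generalizing i j with
  | _ m ih =>
    by_cases hi : n ≤ i
    · rw [h.eq_zero i j hij (hi.trans hij)]
      refine (Finset.sum_eq_zero fun k hk => ?_).symm
      have hk : k < i := (Finset.mem_range.mp hk).trans_le hi
      rcases hij.eq_or_lt with rfl | hij
      · simp [fixedCoeff_self, hk.ne]
      · simp [fixedCoeff_eq_zero (k := k) hij (by omega)]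
    have ih' (j : ℕ) (hj : i + 1 ≤ j) :
        Z (i + 1) j = ∑ k ∈ Finset.range n, Z k k * fixedCoeff k (i + 1) j :=
      ih (n - (i + 1)) (by omega) hj rfl
    obtain hji | ⟨j, rfl, hij'⟩ : j = i ∨ ∃ j', j = j' + 1 ∧ i ≤ j' := by
      rcases hij.eq_or_lt with h | h
      · exact .inl h.symm
      · exact .inr ⟨j - 1, by omega, by omega⟩
    · rw [hji, Finset.sum_eq_single i]
      · simp [fixedCoeff_self]
      · intro k _ hk
        simp [fixedCoeff_self, hk]
      · intro hi'
        exact absurd (Finset.mem_range.mpr (by omega)) hi'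
    · simp_rw [h.succ_right i j hij', ← fixedCoeff_pascal _ hij', Nat.cast_add, Nat.cast_ite,
        Nat.cast_zero, mul_add, Finset.sum_add_distrib, ← ih' (j + 1) (by omega)]
      split_ifs with hj
      · rw [ih' j hj.le]
      · simp

theorem diag_eq_zero (h : IsFixedCoords n Z) {k : ℕ} (hk : n < 2 * k) : Z k k = 0 := by
  induction hm : n - k using Nat.strong_induction_on generalizing k with
  | _ m ih =>
    by_cases hkn : n ≤ k
    · exact h.eq_zero k k le_rfl hkn
    have hcol : Z (2 * k - n) (n - 1) = 0 := by
      have := h.succ_right (2 * k - n - 1) (n - 1) (by omega)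
      rwa [if_pos (by omega), show 2 * k - n - 1 + 1 = 2 * k - n by omega,
        show n - 1 + 1 = n by omega, h.eq_zero _ _ (by omega) le_rfl,
        h.eq_zero _ _ (by omega) le_rfl, add_zero, eq_comm] at this
    rw [h.eq_sum_diag (by omega), Finset.sum_eq_single k] at hcol
    · simpa [fixedCoeff_eq_one (k := k) (show 2 * k - n < n - 1 by omega) (by omega)] using hcol
    · intro k' _ hk'
      rcases lt_or_gt_of_ne hk' with hlt | hgt
      · simp [fixedCoeff_eq_zero (k := k') (show 2 * k - n < n - 1 by omega) (by omega)]
      · simp [ih (n - k') (by omega) (by omega) rfl]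
    · intro hk'
      exact absurd (Finset.mem_range.mpr (by omega)) hk'

theorem eq_zero_of_diag (h : IsFixedCoords n Z) (hd : ∀ k, 2 * k ≤ n → Z k k = 0) {i j : ℕ}
    (hij : i ≤ j) : Z i j = 0 := by
  rw [h.eq_sum_diag hij]
  refine Finset.sum_eq_zero fun k _ => ?_
  rw [(le_or_gt (2 * k) n).elim (hd k) h.diag_eq_zero, zero_mul]

end IsFixedCoords

theorem isFixedCoords_fixedCoeff {R : Type*} [CommSemiring R] {n k : ℕ} (hk : 2 * k ≤ n) :
    IsFixedCoords n fun i j => if j < n then (fixedCoeff k i j : R) else 0 where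
  eq_zero p q _ hq := if_neg (by omega)
  succ_right p q hpq := by
    by_cases hq : q + 1 < n
    · simp only [if_pos hq, if_pos (show q < n by omega), ← fixedCoeff_pascal k hpq,
        Nat.cast_add, Nat.cast_ite, Nat.cast_zero]
    · simp only [if_neg hq, add_zero]
      split_ifs with h₁ h₂
      · rw [fixedCoeff_eq_zero h₁ (by omega), Nat.cast_zero]
      · rfl
      · rfl

namespace SymSq

variable {K V W : Type*} [Field K] [AddCommGroup V] [Module K V] [AddCommGroup W] [Module K W]

theorem mul_comm (x y : V) : mul (K := K) x y = mul y x := by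
  rw [mul, mul, Submodule.Quotient.eq]
  exact Submodule.subset_span ⟨x, y, rfl⟩

noncomputable def lift (f : V →ₗ[K] V →ₗ[K] W) (hf : ∀ x y, f x y = f y x) :
    SymSq K V →ₗ[K] W :=
  Submodule.liftQ _ (TensorProduct.lift f) <| Submodule.span_le.mpr <| by
    rintro _ ⟨x, y, rfl⟩
    simp [hf x y]

@[simp]
theorem lift_mul (f : V →ₗ[K] V →ₗ[K] W) (hf : ∀ x y, f x y = f y x) (x y : V) :
    lift f hf (mul x y) = f x y :=
  rfl

theorem ext {f g : SymSq K V →ₗ[K] W} (h : ∀ x y, f (mul x y) = g (mul x y)) : f = g :=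
  Submodule.linearMap_qext _ (TensorProduct.ext' h)

theorem ext_basis {ι : Type*} (b : Basis ι K V) {f g : SymSq K V →ₗ[K] W}
    (h : ∀ i j, f (mul (b i) (b j)) = g (mul (b i) (b j))) : f = g :=
  Submodule.linearMap_qext _ (TensorProduct.ext (LinearMap.ext_basis b b h))

section Coord

variable {ι : Type*} [DecidableEq ι] (c : ι → V →ₗ[K] K)

/-- For the dual basis of a basis `e`, this is the coefficient of `e p * e q`. -/
noncomputable def coord (p q : ι) : SymSq K V →ₗ[K] K :=
  lift (if p = q then (c p).smulRight (c p) else (c p).smulRight (c q) + (c q).smulRight (c p))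
    (by intro x y; split_ifs <;> simp [_root_.mul_comm, add_comm])

theorem coord_mul (p q : ι) (x y : V) :
    coord c p q (mul x y) = if p = q then c p x * c p y else c p x * c q y + c q x * c p y := by
  simp only [coord, lift_mul]
  split_ifs <;> simp

theorem coord_eq_zero_of_right {p q : ι} (hq : c q = 0) : coord c p q = 0 :=
  ext fun x y => by
    rw [coord_mul]
    split_ifs with h
    · simp [h, hq]
    · simp [hq]

end Coord

theorem coord_sub_one_apply [CharP K 2] {c : ℕ → V →ₗ[K] K} {u : Module.End K V}
    (hc : ∀ p, c p ∘ₗ (u - 1) = c (p + 1)) {ut : Module.End K (SymSq K V)}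
    (hut : ∀ x y, ut (mul x y) = mul (u x) (u y)) {p q : ℕ} (hpq : p ≤ q) (z : SymSq K V) :
    coord c p q ((ut - 1) z) = (if p + 1 < q then coord c (p + 1) q z else 0) +
      coord c p (q + 1) z + coord c (p + 1) (q + 1) z := by
  suffices H : coord c p q ∘ₗ (ut - 1) = (if p + 1 < q then coord c (p + 1) q else 0) +
      coord c p (q + 1) + coord c (p + 1) (q + 1) by
    have h := LinearMap.congr_fun H z
    split_ifs at h ⊢ <;> simpa using h
  have hc (p : ℕ) (x : V) : c p (u x) = c p x + c (p + 1) x := by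
    simp [← hc p]
  refine ext fun x y => ?_
  have hq : p ≠ q + 1 := by omega
  split_ifs with h₀
  · simp only [LinearMap.comp_apply, LinearMap.sub_apply, LinearMap.add_apply, End.one_apply,
      map_sub, hut, coord_mul, hc, hq, show p ≠ q by omega, show p + 1 ≠ q by omega,
      Nat.add_right_cancel_iff, ↓reduceIte]
    ring
  · obtain rfl | rfl : q = p ∨ q = p + 1 := by omega
    · simp only [LinearMap.comp_apply, LinearMap.sub_apply, LinearMap.add_apply, End.one_apply,
        map_sub, hut, coord_mul, hc, Nat.left_eq_add, one_ne_zero, ↓reduceIte, zero_add]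
      ring
    · -- the two contributions of `e (p+1) * e (p+1)` cancel in characteristic two
      simp only [LinearMap.comp_apply, LinearMap.sub_apply, LinearMap.add_apply, End.one_apply,
        map_sub, hut, coord_mul, hc, hq, Nat.left_eq_add, one_ne_zero, ↓reduceIte, zero_add]
      linear_combination (c (p + 1) x * c (p + 1) y) * CharTwo.two_eq_zero (R := K)

section Basis

variable {n : ℕ}

theorem coord_natCoord_mul_basis (b : Basis (Fin n) K V) (p q : ℕ) (i j : Fin n) :
    coord b.natCoord p q (mul (b i) (b j)) =
      if (p = i ∧ q = j) ∨ (p = j ∧ q = i) then 1 else 0 := by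
  rw [coord_mul]
  simp only [Basis.natCoord_basis]
  split_ifs <;> first | omega | simp

noncomputable def ofCoords (b : Basis (Fin n) K V) (Z : ℕ → ℕ → K) : SymSq K V :=
  ∑ i : Fin n, ∑ j : Fin n, (if i ≤ j then Z i j else 0) • mul (b i) (b j)

theorem coord_ofCoords (b : Basis (Fin n) K V) (Z : ℕ → ℕ → K) {p q : ℕ} (hpq : p ≤ q)
    (hq : q < n) : coord b.natCoord p q (ofCoords b Z) = Z p q := by
  have key (i j : Fin n) : (if i ≤ j then Z i j else 0) *
      (if (p = i ∧ q = j) ∨ (p = j ∧ q = i) then 1 else 0) =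
      if i = ⟨p, by omega⟩ then if j = ⟨q, hq⟩ then Z p q else 0 else 0 := by
    simp only [Fin.ext_iff, Fin.le_def]
    split_ifs <;> first | omega | simp_all
  simp only [ofCoords, map_sum, map_smul, coord_natCoord_mul_basis, smul_eq_mul, key]
  simp

theorem ofCoords_coord (b : Basis (Fin n) K V) (z : SymSq K V) :
    ofCoords b (fun p q => coord b.natCoord p q z) = z := by
  let L : SymSq K V →ₗ[K] SymSq K V := ∑ i : Fin n, ∑ j : Fin n,
    if i ≤ j then (coord b.natCoord i j).smulRight (mul (b i) (b j)) else 0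
  have hL (z : SymSq K V) : L z = ofCoords b fun p q => coord b.natCoord p q z := by
    simp only [L, ofCoords, LinearMap.sum_apply]
    refine Finset.sum_congr rfl fun i _ => Finset.sum_congr rfl fun j _ => ?_
    split_ifs <;> simp
  suffices L = LinearMap.id by rw [← hL, this, LinearMap.id_apply]
  have hle (a c : Fin n) (hac : a ≤ c) : L (mul (b a) (b c)) = mul (b a) (b c) := by
    have key (i j : Fin n) : (if i ≤ j then coord b.natCoord i j (mul (b a) (b c)) else 0) •
        mul (b i) (b j) = if i = a then if j = c then mul (K := K) (b a) (b c) else 0 else 0 := by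
      rw [coord_natCoord_mul_basis]
      simp only [Fin.ext_iff, Fin.le_def] at hac ⊢
      split_ifs <;> first | omega | simp_all [Fin.val_inj]
    simp only [hL, ofCoords, key]
    simp
  refine ext_basis b fun a c => ?_
  rcases le_total a c with h | h
  · exact hle a c h
  · rw [LinearMap.id_apply, mul_comm, hle c a h]

theorem eq_zero_of_coord (b : Basis (Fin n) K V) {z : SymSq K V}
    (hz : ∀ p q, p ≤ q → q < n → coord b.natCoord p q z = 0) : z = 0 := by
  rw [← ofCoords_coord b z]
  refine Finset.sum_eq_zero fun i _ => Finset.sum_eq_zero fun j _ => ?_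
  split_ifs with h
  · simp [hz i j h j.isLt]
  · simp

variable [CharP K 2] {u : Module.End K V} {ut : Module.End K (SymSq K V)}

theorem sub_one_apply_eq_zero_iff (b : Basis (Fin n) K V)
    (hu : ∀ p, b.natCoord p ∘ₗ (u - 1) = b.natCoord (p + 1))
    (hut : ∀ x y, ut (mul x y) = mul (u x) (u y)) (z : SymSq K V) :
    (ut - 1) z = 0 ↔ IsFixedCoords n fun p q => coord b.natCoord p q z := by
  constructor
  · intro hz
    refine ⟨fun p q _ hq => ?_, fun p q hpq => ?_⟩
    · rw [coord_eq_zero_of_right _ (b.natCoord_of_le hq), LinearMap.zero_apply]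
    · have h := coord_sub_one_apply hu hut hpq z
      rw [hz, map_zero, eq_comm, add_right_comm, CharTwo.add_eq_zero] at h
      exact h.symm
  · intro h
    refine eq_zero_of_coord b fun p q hpq _ => ?_
    rw [coord_sub_one_apply hu hut hpq, h.succ_right p q hpq, CharTwo.add_cancel_left,
      CharTwo.add_self_eq_zero]

theorem sub_one_apply_ofCoords_fixedCoeff (b : Basis (Fin n) K V)
    (hu : ∀ p, b.natCoord p ∘ₗ (u - 1) = b.natCoord (p + 1))
    (hut : ∀ x y, ut (mul x y) = mul (u x) (u y)) {k : ℕ} (hk : 2 * k ≤ n) :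
    (ut - 1) (ofCoords b fun i j => fixedCoeff k i j) = 0 := by
  refine (sub_one_apply_eq_zero_iff b hu hut _).2 <|
    (isFixedCoords_fixedCoeff hk).congr fun p q hpq => ?_
  split_ifs with hq
  · rw [coord_ofCoords b _ hpq hq]
  · rw [coord_eq_zero_of_right _ (b.natCoord_of_le (not_lt.1 hq)), LinearMap.zero_apply]

theorem eq_zero_of_sub_one_apply_eq_zero (b : Basis (Fin n) K V)
    (hu : ∀ p, b.natCoord p ∘ₗ (u - 1) = b.natCoord (p + 1))
    (hut : ∀ x y, ut (mul x y) = mul (u x) (u y)) {z : SymSq K V} (hz : (ut - 1) z = 0)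
    (hdiag : ∀ k, 2 * k ≤ n → coord b.natCoord k k z = 0) : z = 0 :=
  eq_zero_of_coord b fun _ _ hpq _ =>
    ((sub_one_apply_eq_zero_iff b hu hut z).1 hz).eq_zero_of_diag hdiag hpq

theorem finrank_ker_sub_one (b : Basis (Fin n) K V)
    (hu : ∀ p, b.natCoord p ∘ₗ (u - 1) = b.natCoord (p + 1))
    (hut : ∀ x y, ut (mul x y) = mul (u x) (u y)) (hn : 1 ≤ n) :
    finrank K (LinearMap.ker (ut - 1)) = n / 2 + 1 := by
  let Φ : LinearMap.ker (ut - 1) →ₗ[K] Fin (n / 2 + 1) → K :=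
    LinearMap.pi fun k => coord b.natCoord k k ∘ₗ (LinearMap.ker (ut - 1)).subtype
  have hinj : Function.Injective Φ := by
    refine (injective_iff_map_eq_zero Φ).2 fun z hz => Subtype.ext ?_
    exact eq_zero_of_sub_one_apply_eq_zero b hu hut z.2 fun k hk => congrFun hz ⟨k, by omega⟩
  let w (k : Fin (n / 2 + 1)) : LinearMap.ker (ut - 1) :=
    ⟨_, sub_one_apply_ofCoords_fixedCoeff b hu hut (k := k) (by omega)⟩
  have hw (k : Fin (n / 2 + 1)) : Φ (w k) = Pi.single k 1 := by
    funext l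
    simp [Φ, w, coord_ofCoords b _ le_rfl (show (l : ℕ) < n by omega), fixedCoeff_self,
      Pi.single_apply, Fin.ext_iff, eq_comm]
  have hsurj : Function.Surjective Φ := fun c =>
    ⟨∑ k, c k • w k, funext fun l => by simp [hw, Pi.single_apply]⟩
  rw [(LinearEquiv.ofBijective Φ ⟨hinj, hsurj⟩).finrank_eq, Module.finrank_fin_fun]

end Basis

end SymSq

theorem stmt1_general (K : Type*) [Field K] [CharP K 2]
    (V : Type*) [AddCommGroup V] [Module K V]
    (n : ℕ) (hn : 1 ≤ n) (hdim : Module.finrank K V = n)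
    (u : Module.End K V)
    (hu1 : (u - 1) ^ (n - 1) ≠ 0) (hu2 : (u - 1) ^ n = 0)
    (ut : Module.End K (SymSq K V))
    (hut : ∀ x y : V, ut (SymSq.mul x y) = SymSq.mul (u x) (u y)) :
    Module.finrank K ↥(LinearMap.ker (ut - 1)) = n / 2 + 1 := by
  obtain ⟨b, hb⟩ := Module.End.exists_basis_natCoord_comp hn hdim hu2 hu1
  exact SymSq.finrank_ker_sub_one b hb hut hn

/-- If `u` is unipotent with a single Jordan block of size `n` on `V` over an algebraically
closed field of characteristic two, then the induced map on the symmetric square `S²(V)` has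
`⌊n/2⌋ + 1` Jordan blocks, i.e. `dim ker(ũ - 1) = ⌊n/2⌋ + 1`. -/
theorem stmt1 (K : Type*) [Field K] [IsAlgClosed K] [CharP K 2]
    (V : Type*) [AddCommGroup V] [Module K V] [FiniteDimensional K V]
    (n : ℕ) (hn : 1 ≤ n) (hdim : Module.finrank K V = n)
    (u : Module.End K V)
    (hu1 : (u - 1) ^ (n - 1) ≠ 0) (hu2 : (u - 1) ^ n = 0)
    (ut : Module.End K (SymSq K V))
    (hut : ∀ x y : V, ut (SymSq.mul x y) = SymSq.mul (u x) (u y)) :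
    Module.finrank K ↥(LinearMap.ker (ut - 1)) = n / 2 + 1 :=
  stmt1_general K V n hn hdim u hu1 hu2 ut hut
end

section
/- Let (V, b) be a finite-dimensional symplectic vector space over an algebraically closed field K of characteristic 2 and let e ∈ sp(V) be nilpotent. Then the following are equivalent: (i) V is a direct sum of pairwise b-orthogonal nondegenerate e-invariant subspaces U_1, …, U_t such that each (U_i, b, e) is isomorphic, via a linear isomorphism that is an isometry and intertwines the nilpotent maps, to the nilpotent model W(m_i) for some integer m_i ≥ 1; (ii) there is a direct sum decomposition V = W ⊕ Z where W and Z are totally singular e-invariant subspaces; (iii) b(ev, v) = 0 for all v ∈ V. -/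
set_option linter.unusedSectionVars false
set_option maxHeartbeats 1000000

-- auxiliary development
set_option linter.unusedSectionVars false
set_option maxHeartbeats 1000000

section Basics
variable {K : Type*} [Field K] [CharP K 2] {V : Type*} [AddCommGroup V] [Module K V]
variable (b : V →ₗ[K] V →ₗ[K] K) (e : Module.End K V)

lemma char2_eq_of_add_eq_zero {a c : K} (h : a + c = 0) : a = c := by
  have : a = -c := eq_neg_of_add_eq_zero_left h
  rwa [CharTwo.neg_eq] at this

lemma bsymm (halt : ∀ v : V, b v v = 0) (x y : V) : b x y = b y x := by
  have h := halt (x + y)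
  simp only [map_add, LinearMap.add_apply, halt] at h
  exact char2_eq_of_add_eq_zero (by linear_combination h)

lemma badj (hsp : ∀ v w : V, b (e v) w + b v (e w) = 0) (x y : V) :
    b (e x) y = b x (e y) :=
  char2_eq_of_add_eq_zero (hsp x y)

lemma pow_apply_succ (k : ℕ) (x : V) : (e ^ (k + 1)) x = (e ^ k) (e x) := by
  rw [pow_succ]; rfl

lemma pow_apply_succ' (k : ℕ) (x : V) : (e ^ (k + 1)) x = e ((e ^ k) x) := by
  rw [pow_succ']; rfl

lemma pow_apply_add (i j : ℕ) (x : V) : (e ^ (i + j)) x = (e ^ i) ((e ^ j) x) := by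
  rw [pow_add]; rfl

lemma badj_pow (hsp : ∀ v w : V, b (e v) w + b v (e w) = 0) (k : ℕ) (x y : V) :
    b ((e ^ k) x) y = b x ((e ^ k) y) := by
  induction k generalizing x with
  | zero => simp
  | succ n ih =>
    rw [pow_apply_succ e n x, ih (e x), badj b e hsp, ← pow_apply_succ' e n y]

lemma bqpow (halt : ∀ v : V, b v v = 0)
    (hsp : ∀ v w : V, b (e v) w + b v (e w) = 0)
    (hq : ∀ x : V, b (e x) x = 0) (k : ℕ) (x : V) : b ((e ^ k) x) x = 0 := by
  rcases Nat.even_or_odd k with ⟨j, hj⟩ | ⟨j, hj⟩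
  · subst hj
    rw [pow_apply_add e j j x, badj_pow b e hsp j ((e ^ j) x) x]
    exact halt _
  · subst hj
    rw [show 2 * j + 1 = j + (j + 1) by ring, pow_apply_add e j (j + 1) x,
      pow_apply_succ' e j x, badj_pow b e hsp j (e ((e ^ j) x)) x]
    exact hq _

lemma bcross (hsp : ∀ v w : V, b (e v) w + b v (e w) = 0) (i j : ℕ) (x y : V) :
    b ((e ^ i) x) ((e ^ j) y) = b ((e ^ (i + j)) x) y := by
  rw [badj_pow b e hsp i, ← pow_apply_add e i j y]
  exact (badj_pow b e hsp (i + j) x y).symm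

lemma epow_zero_of_ge {m : ℕ} (hem : e ^ m = 0) {k : ℕ} (hk : m ≤ k) (x : V) :
    (e ^ k) x = 0 := by
  rw [show k = (k - m) + m by omega, pow_apply_add, hem]
  simp

lemma bnormalize (halt : ∀ v : V, b v v = 0)
    (hsp : ∀ v w : V, b (e v) w + b v (e w) = 0)
    (hq : ∀ x : V, b (e x) x = 0)
    (m : ℕ) (hm1 : 1 ≤ m) (hem : e ^ m = 0) (v w0 : V)
    (hw0 : b ((e ^ (m - 1)) v) w0 = 1) :
    ∃ w : V, (∀ k, b ((e ^ k) w) w = 0) ∧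
      (∀ k, b ((e ^ k) v) w = if k = m - 1 then 1 else 0) := by
  have key : ∀ d : ℕ, ∃ w : V, (∀ k, b ((e ^ k) w) w = 0) ∧
      (b ((e ^ (m - 1)) v) w = 1) ∧
      (∀ k, m - d ≤ k → b ((e ^ k) v) w = if k = m - 1 then 1 else 0) := by
    intro d
    induction d with
    | zero =>
      refine ⟨w0, fun k => bqpow b e halt hsp hq k w0, hw0, fun k hk => ?_⟩
      rw [epow_zero_of_ge e hem (by omega) v]
      simp only [map_zero, LinearMap.zero_apply]
      rw [if_neg (by omega)]
    | succ d ih =>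
      obtain ⟨w, hself, hone, hge⟩ := ih
      by_cases hd : m - (d + 1) = m - d
      · exact ⟨w, hself, hone, fun k hk => hge k (by omega)⟩
      -- now m - (d+1) = m - d - 1 and m - d ≥ 1, i.e. d < m
      have hdm : d < m := by omega
      set j : ℕ := m - (d + 1) with hj
      have hjd : j + 1 = m - d := by omega
      by_cases hjm : j = m - 1
      · refine ⟨w, hself, hone, fun k hk => ?_⟩
        rcases eq_or_lt_of_le hk with h | h
        · rw [← h, hjm, if_pos rfl]
          exact hone
        · exact hge k (by omega)
      · -- j < m - 1
        have hjlt : j < m - 1 := by omega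
        set a : K := b ((e ^ j) v) w with ha
        set dd : ℕ := m - 1 - j with hdd
        have hdd1 : 1 ≤ dd := by omega
        refine ⟨w + a • (e ^ dd) w, ?_, ?_, ?_⟩
        · intro k
          have h1 : (e ^ k) (w + a • (e ^ dd) w)
              = (e ^ k) w + a • (e ^ (k + dd)) w := by
            rw [map_add, map_smul, ← pow_apply_add]
          rw [h1]
          simp only [map_add, map_smul, LinearMap.add_apply, LinearMap.smul_apply,
            smul_eq_mul]
          rw [bcross b e hsp k dd, bcross b e hsp (k + dd) dd]
          rw [hself, hself, hself]
          ring
        · rw [map_add, map_smul, smul_eq_mul, bcross b e hsp (m - 1) dd,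
            epow_zero_of_ge e hem (k := m - 1 + dd) (by omega) v]
          simp [hone]
        · intro k hk
          rw [map_add, map_smul, smul_eq_mul, bcross b e hsp k dd]
          rcases eq_or_lt_of_le hk with h | h
          · rw [← h]
            have hjdd : j + dd = m - 1 := by omega
            rw [hjdd, hone, ← ha, mul_one, if_neg hjm]
            exact CharTwo.add_self_eq_zero a
          · rw [hge k (by omega), epow_zero_of_ge e hem (k := k + dd) (by omega) v]
            simp
  obtain ⟨w, hself, _, hge⟩ := key m
  exact ⟨w, hself, fun k => hge k (by omega)⟩

end Basics

open Module

universe u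

lemma core {K : Type*} [Field K] [CharP K 2] (n : ℕ) :
    ∀ (V : Type u) [AddCommGroup V] [Module K V] [FiniteDimensional K V]
      (b : V →ₗ[K] V →ₗ[K] K),
      (∀ v : V, b v v = 0) → (∀ v : V, (∀ w : V, b v w = 0) → v = 0) →
      ∀ (e : Module.End K V),
      (∀ v w : V, b (e v) w + b v (e w) = 0) → IsNilpotent e →
      (∀ x : V, b (e x) x = 0) → (finrank K V = n) →
      ∃ (t : ℕ) (m : Fin t → ℕ) (v : Fin t → ℕ → V),
        (∀ i, 1 ≤ m i) ∧ (∑ i, 2 * m i = n) ∧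
        (∀ i k, 2 * m i ≤ k → v i k = 0) ∧
        (∀ i i' k k', b (v i k) (v i' k') =
          if i = i' ∧ k + k' = 2 * m i - 1 then (1 : K) else 0) ∧
        (∀ i k, k < 2 * m i → e (v i k) = if k = 0 ∨ k = m i then 0 else v i (k - 1)) := by
  induction n using Nat.strong_induction_on with
  | _ n ih =>
  intro V _ _ _ b halt hnd e hsp hnil hq hdim
  classical
  by_cases hn : n = 0
  · subst hn
    exact ⟨0, Fin.elim0, fun i => Fin.elim0 i, fun i => Fin.elim0 i, by simp,
      fun i => Fin.elim0 i, fun i i' => Fin.elim0 i, fun i => Fin.elim0 i⟩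
  -- V is nontrivial
  have hVnt : Nontrivial V := by
    rw [← Module.finrank_pos_iff (R := K)]
    omega
  -- minimal vanishing power
  have hex : ∃ k, e ^ k = 0 := hnil
  set m : ℕ := Nat.find hex with hmdef
  have hem : e ^ m = 0 := Nat.find_spec hex
  have hm1 : 1 ≤ m := by
    rcases Nat.eq_zero_or_pos m with h0 | h0
    · exfalso
      rw [h0, pow_zero] at hem
      obtain ⟨x, hx⟩ := exists_ne (0 : V)
      exact hx (by simpa using LinearMap.congr_fun hem x)
    · exact h0
  have hlt : e ^ (m - 1) ≠ 0 := Nat.find_min hex (by omega)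
  obtain ⟨v, hv⟩ : ∃ v : V, (e ^ (m - 1)) v ≠ 0 := by
    by_contra h
    push_neg at h
    exact hlt (LinearMap.ext fun x => by simpa using h x)
  obtain ⟨w1, hw1⟩ : ∃ w1 : V, b ((e ^ (m - 1)) v) w1 ≠ 0 := by
    by_contra h
    push_neg at h
    exact hv (hnd _ h)
  have hw0 : b ((e ^ (m - 1)) v) ((b ((e ^ (m - 1)) v) w1)⁻¹ • w1) = 1 := by
    rw [map_smul, smul_eq_mul, inv_mul_cancel₀ hw1]
  obtain ⟨w, hwself, hvw⟩ := bnormalize b e halt hsp hq m hm1 hem v _ hw0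
  have hvself : ∀ k, b ((e ^ k) v) v = 0 := fun k => bqpow b e halt hsp hq k v
  -- the model basis
  set u : ℕ → V := fun k =>
    if k < m then (e ^ (m - 1 - k)) v else if k < 2 * m then (e ^ (2 * m - 1 - k)) w
      else 0 with hu
  have huA : ∀ k, k < m → u k = (e ^ (m - 1 - k)) v := by
    intro k hk
    simp only [hu]
    rw [if_pos hk]
  have huB : ∀ k, m ≤ k → k < 2 * m → u k = (e ^ (2 * m - 1 - k)) w := by
    intro k hk1 hk2
    simp only [hu]
    rw [if_neg (show ¬ k < m by omega), if_pos hk2]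
  have hu0 : ∀ k, 2 * m ≤ k → u k = 0 := by
    intro k hk
    simp only [hu]
    rw [if_neg (show ¬ k < m by omega), if_neg (show ¬ k < 2 * m by omega)]
  have hgram : ∀ k k', b (u k) (u k') = if k + k' = 2 * m - 1 then (1 : K) else 0 := by
    have hAB : ∀ k k', k < m → m ≤ k' → k' < 2 * m →
        b ((e ^ (m - 1 - k)) v) ((e ^ (2 * m - 1 - k')) w)
          = if k + k' = 2 * m - 1 then (1 : K) else 0 := by
      intro k k' h1 h2 h3
      rw [bcross b e hsp, hvw]
      congr 1
      simp only [eq_iff_iff]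
      omega
    intro k k'
    by_cases hC : 2 * m ≤ k
    · rw [hu0 k hC]
      simp only [map_zero, LinearMap.zero_apply]
      rw [if_neg (show ¬ k + k' = 2 * m - 1 by omega)]
    by_cases hC' : 2 * m ≤ k'
    · rw [hu0 k' hC', map_zero, if_neg (show ¬ k + k' = 2 * m - 1 by omega)]
    by_cases hA : k < m <;> by_cases hA' : k' < m
    · rw [huA k hA, huA k' hA', bcross b e hsp, hvself,
        if_neg (show ¬ k + k' = 2 * m - 1 by omega)]
    · rw [huA k hA, huB k' (by omega) (by omega)]
      exact hAB k k' hA (by omega) (by omega)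
    · rw [huB k (by omega) (by omega), huA k' hA', bsymm b halt,
        hAB k' k hA' (by omega) (by omega)]
      congr 1
      simp only [eq_iff_iff]
      omega
    · rw [huB k (by omega) (by omega), huB k' (by omega) (by omega),
        bcross b e hsp, hwself, if_neg (show ¬ k + k' = 2 * m - 1 by omega)]
  have heact : ∀ k, k < 2 * m → e (u k) = if k = 0 ∨ k = m then 0 else u (k - 1) := by
    intro k hk
    by_cases h0 : k = 0
    · subst h0
      rw [huA 0 (by omega), Nat.sub_zero, if_pos (Or.inl rfl),
        ← pow_apply_succ' e (m - 1) v, show m - 1 + 1 = m by omega, hem]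
      simp
    by_cases hkm : k < m
    · rw [huA k hkm, if_neg (show ¬ (k = 0 ∨ k = m) by omega),
        huA (k - 1) (by omega), ← pow_apply_succ' e (m - 1 - k) v]
      congr 2
      omega
    by_cases hkm' : k = m
    · subst hkm'
      rw [huB m (by omega) (by omega), if_pos (Or.inr rfl),
        ← pow_apply_succ' e (2 * m - 1 - m) w, show 2 * m - 1 - m + 1 = m by omega, hem]
      simp
    · rw [huB k (by omega) (by omega), if_neg (show ¬ (k = 0 ∨ k = m) by omega),
        huB (k - 1) (by omega) (by omega), ← pow_apply_succ' e (2 * m - 1 - k) w]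
      congr 2
      omega
  -- the submodules
  set U : Submodule K V := Submodule.span K (Set.range fun k : Fin (2 * m) => u ↑k)
    with hUdef
  set U' : Submodule K V := ⨅ k : ℕ, LinearMap.ker (b (u k)) with hU'def
  have hmemU' : ∀ x : V, x ∈ U' ↔ ∀ k, b (u k) x = 0 := by
    intro x
    simp [hU'def, Submodule.mem_iInf, LinearMap.mem_ker]
  -- coefficient extraction
  have hcoef : ∀ (c : Fin (2 * m) → K) (k : ℕ) (hk : k < 2 * m),
      b (u k) (∑ j, c j • u ↑j) = c ⟨2 * m - 1 - k, by omega⟩ := by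
    intro c k hk
    rw [map_sum]
    have : ∀ j : Fin (2 * m),
        b (u k) (c j • u ↑j) = if j = (⟨2 * m - 1 - k, by omega⟩ : Fin (2 * m))
          then c j else 0 := by
      intro j
      rw [map_smul, smul_eq_mul, hgram]
      by_cases hj : (j : ℕ) = 2 * m - 1 - k
      · rw [if_pos (by omega), if_pos (Fin.ext hj), mul_one]
      · rw [if_neg (by omega), if_neg (fun h => hj (by rw [h])), mul_zero]
    rw [Finset.sum_congr rfl fun j _ => this j, Finset.sum_ite_eq' Finset.univ]
    rw [if_pos (Finset.mem_univ _)]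
  have hmemU : ∀ k : ℕ, u k ∈ U := by
    intro k
    by_cases hk : k < 2 * m
    · exact Submodule.subset_span ⟨⟨k, hk⟩, rfl⟩
    · rw [hu0 k (by omega)]; exact U.zero_mem
  have hUmem_iff : ∀ x : V, x ∈ U ↔ ∃ c : Fin (2 * m) → K, ∑ j, c j • u ↑j = x := by
    intro x
    exact Submodule.mem_span_range_iff_exists_fun K
  -- IsCompl
  have hdisj : U ⊓ U' = ⊥ := by
    rw [Submodule.eq_bot_iff]
    rintro x ⟨hxU, hxU'⟩
    obtain ⟨c, hc⟩ := (hUmem_iff x).mp hxU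
    have hc0 : ∀ j : Fin (2 * m), c j = 0 := by
      intro j
      have h1 := hcoef c (2 * m - 1 - (j : ℕ)) (by omega)
      rw [hc] at h1
      have h2 := (hmemU' x).mp hxU' (2 * m - 1 - (j : ℕ))
      rw [h2] at h1
      have h3 : (⟨2 * m - 1 - (2 * m - 1 - (j : ℕ)), by omega⟩ : Fin (2 * m)) = j := by
        have := j.isLt
        apply Fin.ext
        simp only [Fin.val_mk]
        omega
      rw [← h3]
      exact h1.symm
    rw [← hc]
    simp [hc0]
  have hcodisj : U ⊔ U' = ⊤ := by
    rw [Submodule.eq_top_iff']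
    intro x
    set p : V := ∑ j : Fin (2 * m), (b (u (2 * m - 1 - (j : ℕ))) x) • u ↑j with hp
    have hpU : p ∈ U := Submodule.sum_mem _ fun j _ => Submodule.smul_mem _ _ (hmemU _)
    have hxp : x - p ∈ U' := by
      rw [hmemU']
      intro k
      by_cases hk : k < 2 * m
      · rw [map_sub]
        rw [hcoef (fun j => b (u (2 * m - 1 - (j : ℕ))) x) k hk]
        simp only []
        rw [show 2 * m - 1 - (2 * m - 1 - k) = k by omega, sub_self]
      · rw [hu0 k (by omega)]
        simp
    have : x = p + (x - p) := by abel
    rw [this]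
    exact Submodule.add_mem _ (Submodule.mem_sup_left hpU) (Submodule.mem_sup_right hxp)
  have hcompl : IsCompl U U' := ⟨disjoint_iff.mpr hdisj, codisjoint_iff.mpr hcodisj⟩
  -- linear independence of u, finrank U = 2m
  have huind : LinearIndependent K (fun k : Fin (2 * m) => u ↑k) := by
    rw [Fintype.linearIndependent_iff]
    intro g hg j
    have h1 := hcoef g (2 * m - 1 - (j : ℕ)) (by omega)
    rw [hg, map_zero] at h1
    have h3 : (⟨2 * m - 1 - (2 * m - 1 - (j : ℕ)), by omega⟩ : Fin (2 * m)) = j := by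
      have := j.isLt
      apply Fin.ext
      simp only [Fin.val_mk]
      omega
    rw [← h3]
    exact h1.symm
  have hfrU : finrank K U = 2 * m := by
    rw [hUdef, finrank_span_eq_card huind]
    simp
  have hfrU' : finrank K U' = n - 2 * m := by
    have := Submodule.finrank_add_eq_of_isCompl hcompl
    omega
  have hmn : 2 * m ≤ n := by
    have := Submodule.finrank_add_eq_of_isCompl hcompl
    omega
  -- e-invariance of U'
  have hinv : ∀ x ∈ U', e x ∈ U' := by
    intro x hx
    rw [hmemU'] at hx ⊢
    intro k
    rw [← badj b e hsp (u k) x]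
    by_cases hk : k < 2 * m
    · rw [heact k hk]
      by_cases h0 : k = 0 ∨ k = m
      · rw [if_pos h0]; simp
      · rw [if_neg h0]; exact hx (k - 1)
    · rw [hu0 k (by omega)]; simp
  -- restricted structures
  set b' : ↥U' →ₗ[K] ↥U' →ₗ[K] K := b.compl₁₂ U'.subtype U'.subtype with hb'
  have hb'app : ∀ x y : ↥U', b' x y = b ↑x ↑y := fun x y => rfl
  set e' : Module.End K ↥U' := e.restrict hinv with he'
  have he'app : ∀ x : ↥U', ((e' x : ↥U') : V) = e ↑x := fun x => rfl
  have he'nil : IsNilpotent e' := by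
    obtain ⟨N, hN⟩ := hnil
    refine ⟨N, ?_⟩
    rw [he', Module.End.pow_restrict N hinv]
    ext x
    rw [LinearMap.restrict_apply]
    simp [hN]
  have halt' : ∀ x : ↥U', b' x x = 0 := fun x => halt ↑x
  have hq' : ∀ x : ↥U', b' (e' x) x = 0 := fun x => hq ↑x
  have hsp' : ∀ x y : ↥U', b' (e' x) y + b' x (e' y) = 0 := fun x y => hsp ↑x ↑y
  have hnd' : ∀ x : ↥U', (∀ y : ↥U', b' x y = 0) → x = 0 := by
    intro x hxy
    have hall : ∀ z : V, b ↑x z = 0 := by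
      intro z
      have hz : z ∈ U ⊔ U' := by rw [hcodisj]; exact Submodule.mem_top
      obtain ⟨p, hp, q, hq2, rfl⟩ := Submodule.mem_sup.mp hz
      rw [map_add]
      obtain ⟨c, hc⟩ := (hUmem_iff p).mp hp
      have h1 : b ↑x p = 0 := by
        rw [← hc, map_sum]
        refine Finset.sum_eq_zero fun j _ => ?_
        rw [map_smul, smul_eq_mul, bsymm b halt, (hmemU' ↑x).mp x.2 ↑j, mul_zero]
      have h2 : b ↑x q = 0 := hxy ⟨q, hq2⟩
      rw [h1, h2, add_zero]
    exact Subtype.ext (hnd ↑x hall)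
  obtain ⟨t, m', v', hm'1, hsum', hzero', hgram', heact'⟩ :=
    ih (n - 2 * m) (by omega) ↥U' b' halt' hnd' e' hsp' he'nil hq' (by rw [hfrU'])
  refine ⟨t + 1, Fin.cons m m', Fin.cons u (fun i k => ((v' i k : ↥U') : V)),
    ?_, ?_, ?_, ?_, ?_⟩
  · intro i
    refine Fin.cases ?_ ?_ i
    · rw [Fin.cons_zero]; exact hm1
    · intro j; rw [Fin.cons_succ]; exact hm'1 j
  · rw [Fin.sum_univ_succ]
    simp only [Fin.cons_zero, Fin.cons_succ]
    rw [hsum']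
    omega
  · intro i
    refine Fin.cases ?_ ?_ i
    · intro k hk
      simp only [Fin.cons_zero] at hk ⊢
      exact hu0 k hk
    · intro j k hk
      simp only [Fin.cons_succ] at hk ⊢
      rw [hzero' j k hk]
      rfl
  · intro i i'
    refine Fin.cases ?_ ?_ i
    · refine Fin.cases ?_ ?_ i'
      · intro k k'
        simp only [Fin.cons_zero]
        rw [hgram k k']
        by_cases h : k + k' = 2 * m - 1 <;> simp [h]
      · intro j k k'
        simp only [Fin.cons_zero, Fin.cons_succ]
        rw [(hmemU' ((v' j k' : ↥U') : V)).mp (v' j k').2 k,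
          if_neg (fun h => (Fin.succ_ne_zero j) h.1.symm)]
    · intro j
      refine Fin.cases ?_ ?_ i'
      · intro k k'
        simp only [Fin.cons_zero, Fin.cons_succ]
        rw [bsymm b halt, (hmemU' ((v' j k : ↥U') : V)).mp (v' j k).2 k',
          if_neg (fun h => (Fin.succ_ne_zero j) h.1)]
      · intro j' k k'
        simp only [Fin.cons_succ]
        rw [show b ((v' j k : ↥U') : V) ((v' j' k' : ↥U') : V)
            = b' (v' j k) (v' j' k') from rfl, hgram' j j' k k']
        have hcond : ((Fin.succ j : Fin (t + 1)) = Fin.succ j' ∧ k + k' = 2 * m' j - 1)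
            ↔ (j = j' ∧ k + k' = 2 * m' j - 1) := by
          simp [Fin.succ_inj]
        rw [if_congr hcond.symm rfl rfl]
  · intro i
    refine Fin.cases ?_ ?_ i
    · intro k hk
      simp only [Fin.cons_zero] at hk ⊢
      exact heact k hk
    · intro j k hk
      simp only [Fin.cons_succ] at hk ⊢
      rw [show e ((v' j k : ↥U') : V) = ((e' (v' j k) : ↥U') : V) from rfl,
        heact' j k hk]
      by_cases h : k = 0 ∨ k = m' j
      · rw [if_pos h, if_pos h]
        rfl
      · rw [if_neg h, if_neg h]

lemma span_singular {K : Type*} [Field K] {V : Type*} [AddCommGroup V] [Module K V]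
    (b : V →ₗ[K] V →ₗ[K] K) (S : Set V) (hS : ∀ x ∈ S, ∀ y ∈ S, b x y = 0) :
    ∀ x ∈ Submodule.span K S, ∀ y ∈ Submodule.span K S, b x y = 0 := by
  have h1 : ∀ y ∈ S, ∀ x ∈ Submodule.span K S, b x y = 0 := by
    intro y hy x hx
    have h : Submodule.span K S ≤ LinearMap.ker (b.flip y) :=
      Submodule.span_le.mpr (fun z hz => by simpa using hS z hz y hy)
    simpa using h hx
  intro x hx y hy
  have h : Submodule.span K S ≤ LinearMap.ker (b x) :=
    Submodule.span_le.mpr (fun z hz => by simpa using h1 z hz x hx)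
  simpa using h hy

/-- the full model decomposition from (iii) -/
lemma modelDecomp {K : Type*} [Field K] [CharP K 2]
    {V : Type u} [AddCommGroup V] [Module K V] [FiniteDimensional K V]
    (b : V →ₗ[K] V →ₗ[K] K)
    (halt : ∀ v : V, b v v = 0)
    (hnd : ∀ v : V, (∀ w : V, b v w = 0) → v = 0)
    (e : Module.End K V)
    (hsp : ∀ v w : V, b (e v) w + b v (e w) = 0)
    (hnil : IsNilpotent e)
    (hq : ∀ x : V, b (e x) x = 0) :
    ∃ (t : ℕ) (m : Fin t → ℕ) (v : Fin t → ℕ → V),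
        (∀ i, 1 ≤ m i) ∧
        LinearIndependent K
          (fun p : Σ i : Fin t, Fin (2 * m i) => v p.1 (p.2 : ℕ)) ∧
        Submodule.span K
          (Set.range (fun p : Σ i : Fin t, Fin (2 * m i) => v p.1 (p.2 : ℕ))) = ⊤ ∧
        (∀ i, ∀ n : ℕ, 2 * m i ≤ n → v i n = 0) ∧
        (∀ i i' : Fin t, ∀ n n' : ℕ,
          b (v i n) (v i' n') = if i = i' ∧ n + n' = 2 * m i - 1 then 1 else 0) ∧
        (∀ i, ∀ n : ℕ, n < 2 * m i →
          e (v i n) = if n = 0 ∨ n = m i then 0 else v i (n - 1)) := by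
  classical
  obtain ⟨t, m, v, hm1, hsum, hzero, hgram, heact⟩ :=
    core (Module.finrank K V) V b halt hnd e hsp hnil hq rfl
  have hind : LinearIndependent K
      (fun p : Σ i : Fin t, Fin (2 * m i) => v p.1 (p.2 : ℕ)) := by
    rw [Fintype.linearIndependent_iff]
    intro g hg p0
    obtain ⟨i, k⟩ := p0
    have hklt := k.isLt
    have h0 : b (v i (2 * m i - 1 - ↑k))
        (∑ p : Σ i : Fin t, Fin (2 * m i), g p • v p.1 (p.2 : ℕ)) = 0 := by
      rw [hg, map_zero]
    rw [map_sum] at h0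
    have hterm : ∀ p : Σ i : Fin t, Fin (2 * m i),
        b (v i (2 * m i - 1 - ↑k)) (g p • v p.1 (p.2 : ℕ))
          = if p = ⟨i, k⟩ then g p else 0 := by
      rintro ⟨i', k'⟩
      dsimp only
      rw [map_smul, smul_eq_mul, hgram]
      by_cases h : i = i'
      · subst h
        by_cases h2 : (k' : ℕ) = (k : ℕ)
        · have hk' : k' = k := Fin.ext h2
          subst hk'
          rw [if_pos ⟨rfl, by omega⟩, if_pos rfl, mul_one]
        · have hk'lt := k'.isLt
          have hc1 : ¬(i = i ∧ (2 * m i - 1 - ↑k) + (k' : ℕ) = 2 * m i - 1) := by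
            rintro ⟨-, hh⟩
            omega
          have hc2 : (⟨i, k'⟩ : Σ i : Fin t, Fin (2 * m i)) ≠ ⟨i, k⟩ := by
            intro hh
            exact h2 (congrArg (fun p : Σ i : Fin t, Fin (2 * m i) => (p.2 : ℕ)) hh)
          rw [if_neg hc1, if_neg hc2, mul_zero]
      · rw [if_neg (fun hh => h hh.1),
          if_neg (fun hh => h ((congrArg Sigma.fst hh).symm)), mul_zero]
    rw [Finset.sum_congr rfl (fun p _ => hterm p), Finset.sum_ite_eq' Finset.univ,
      if_pos (Finset.mem_univ _)] at h0
    exact h0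
  refine ⟨t, m, v, hm1, hind, ?_, hzero, hgram, heact⟩
  apply Submodule.eq_top_of_finrank_eq
  rw [finrank_span_eq_card hind]
  rw [Fintype.card_sigma]
  simp only [Fintype.card_fin]
  rw [hsum]

lemma decompWZ {K : Type*} [Field K] {V : Type*} [AddCommGroup V] [Module K V]
    (b : V →ₗ[K] V →ₗ[K] K)
    (hnd : ∀ v : V, (∀ w : V, b v w = 0) → v = 0)
    (e : Module.End K V)
    (t : ℕ) (m : Fin t → ℕ) (v : Fin t → ℕ → V)
    (hm1 : ∀ i, 1 ≤ m i)
    (hspan : Submodule.span K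
      (Set.range (fun p : Σ i : Fin t, Fin (2 * m i) => v p.1 (p.2 : ℕ))) = ⊤)
    (hgram : ∀ i i' : Fin t, ∀ n n' : ℕ,
      b (v i n) (v i' n') = if i = i' ∧ n + n' = 2 * m i - 1 then 1 else 0)
    (heact : ∀ i, ∀ n : ℕ, n < 2 * m i →
      e (v i n) = if n = 0 ∨ n = m i then 0 else v i (n - 1)) :
    ∃ W Z : Submodule K V, IsCompl W Z ∧
        (∀ x ∈ W, ∀ y ∈ W, b x y = 0) ∧ (∀ x ∈ Z, ∀ y ∈ Z, b x y = 0) ∧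
        (∀ x ∈ W, e x ∈ W) ∧ (∀ x ∈ Z, e x ∈ Z) := by
  classical
  set SW : Set V := Set.range (fun p : Σ i : Fin t, Fin (m i) => v p.1 (p.2 : ℕ))
    with hSW
  set SZ : Set V := Set.range
    (fun p : Σ i : Fin t, Fin (m i) => v p.1 (m p.1 + (p.2 : ℕ))) with hSZ
  set W := Submodule.span K SW with hWdef
  set Z := Submodule.span K SZ with hZdef
  have hWsing : ∀ x ∈ W, ∀ y ∈ W, b x y = 0 := by
    apply span_singular
    rintro _ ⟨⟨i, k⟩, rfl⟩ _ ⟨⟨i', k'⟩, rfl⟩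
    dsimp only
    rw [hgram, if_neg]
    rintro ⟨rfl, hh⟩
    have := k.isLt
    have := k'.isLt
    have := hm1 i
    omega
  have hZsing : ∀ x ∈ Z, ∀ y ∈ Z, b x y = 0 := by
    apply span_singular
    rintro _ ⟨⟨i, k⟩, rfl⟩ _ ⟨⟨i', k'⟩, rfl⟩
    dsimp only
    rw [hgram, if_neg]
    rintro ⟨rfl, hh⟩
    have := hm1 i
    omega
  have hWinv : ∀ x ∈ W, e x ∈ W := by
    intro x hx
    have hle : W ≤ Submodule.comap e W := by
      rw [hWdef, Submodule.span_le]
      rintro _ ⟨⟨i, k⟩, rfl⟩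
      simp only [SetLike.mem_coe, Submodule.mem_comap]
      have hk := k.isLt
      have hm := hm1 i
      rw [heact i ↑k (by omega)]
      by_cases h0 : (k : ℕ) = 0 ∨ (k : ℕ) = m i
      · rw [if_pos h0]; exact W.zero_mem
      · rw [if_neg h0]
        push_neg at h0
        exact Submodule.subset_span ⟨⟨i, ⟨(k : ℕ) - 1, by omega⟩⟩, rfl⟩
    exact hle hx
  have hZinv : ∀ x ∈ Z, e x ∈ Z := by
    intro x hx
    have hle : Z ≤ Submodule.comap e Z := by
      rw [hZdef, Submodule.span_le]
      rintro _ ⟨⟨i, k⟩, rfl⟩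
      simp only [SetLike.mem_coe, Submodule.mem_comap]
      have hk := k.isLt
      have hm := hm1 i
      rw [heact i (m i + ↑k) (by omega)]
      by_cases h0 : m i + (k : ℕ) = 0 ∨ m i + (k : ℕ) = m i
      · rw [if_pos h0]; exact Z.zero_mem
      · rw [if_neg h0]
        push_neg at h0
        refine Submodule.subset_span ⟨⟨i, ⟨(k : ℕ) - 1, by omega⟩⟩, ?_⟩
        dsimp only
        congr 1
        omega
    exact hle hx
  have hsup : W ⊔ Z = ⊤ := by
    rw [eq_top_iff, ← hspan, Submodule.span_le]
    rintro _ ⟨⟨i, k⟩, rfl⟩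
    dsimp only
    have hk := k.isLt
    by_cases h : (k : ℕ) < m i
    · exact Submodule.mem_sup_left (Submodule.subset_span ⟨⟨i, ⟨k, h⟩⟩, rfl⟩)
    · refine Submodule.mem_sup_right (Submodule.subset_span
        ⟨⟨i, ⟨(k : ℕ) - m i, by omega⟩⟩, ?_⟩)
      dsimp only
      congr 1
      omega
  have hdisj : W ⊓ Z = ⊥ := by
    rw [Submodule.eq_bot_iff]
    rintro x ⟨hxW, hxZ⟩
    apply hnd
    intro z
    have hz : z ∈ W ⊔ Z := by rw [hsup]; exact Submodule.mem_top
    obtain ⟨zw, hzw, zz, hzz, rfl⟩ := Submodule.mem_sup.mp hz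
    rw [map_add, hWsing x hxW zw hzw, hZsing x hxZ zz hzz, add_zero]
  exact ⟨W, Z, ⟨disjoint_iff.mpr hdisj, codisjoint_iff.mpr hsup⟩,
    hWsing, hZsing, hWinv, hZinv⟩

lemma WZ_implies_q {K : Type*} [Field K] [CharP K 2]
    {V : Type*} [AddCommGroup V] [Module K V]
    (b : V →ₗ[K] V →ₗ[K] K)
    (halt : ∀ v : V, b v v = 0)
    (e : Module.End K V)
    (hsp : ∀ v w : V, b (e v) w + b v (e w) = 0)
    (W Z : Submodule K V) (hcompl : IsCompl W Z)
    (hW : ∀ x ∈ W, ∀ y ∈ W, b x y = 0) (hZ : ∀ x ∈ Z, ∀ y ∈ Z, b x y = 0)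
    (hWi : ∀ x ∈ W, e x ∈ W) (hZi : ∀ x ∈ Z, e x ∈ Z) :
    ∀ x : V, b (e x) x = 0 := by
  intro x
  have hx : x ∈ W ⊔ Z := by rw [hcompl.sup_eq_top]; exact Submodule.mem_top
  obtain ⟨p, hp, q, hq, rfl⟩ := Submodule.mem_sup.mp hx
  rw [map_add, map_add]
  simp only [LinearMap.add_apply, map_add]
  rw [hW _ (hWi p hp) _ hp, hZ _ (hZi q hq) _ hq]
  have h1 : b (e q) p = b (e p) q := by
    rw [badj b e hsp q p, bsymm b halt]
  rw [h1]
  have h2 := CharTwo.add_self_eq_zero (b (e p) q)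
  linear_combination h2

/-- Lemma: for a nilpotent `e ∈ sp(V)` over an algebraically closed field of characteristic
two, the following are equivalent: (i) `V` is an orthogonal direct sum of subspaces isometric
to the nilpotent models `W(mᵢ)` (encoded by the existence of a family of basis vectors with
the prescribed form values and `e`-action); (ii) `V = W ⊕ Z` with `W`, `Z` totally singular
`e`-invariant subspaces; (iii) `b(ev, v) = 0` for all `v ∈ V`. -/
theorem stmt3 (K : Type*) [Field K] [IsAlgClosed K] [CharP K 2]
    (V : Type*) [AddCommGroup V] [Module K V] [FiniteDimensional K V]
    (b : V →ₗ[K] V →ₗ[K] K)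
    (halt : ∀ v : V, b v v = 0)
    (hnd : ∀ v : V, (∀ w : V, b v w = 0) → v = 0)
    (e : Module.End K V)
    (hsp : ∀ v w : V, b (e v) w + b v (e w) = 0)
    (hnil : IsNilpotent e) :
    ((∃ (t : ℕ) (m : Fin t → ℕ) (v : Fin t → ℕ → V),
        (∀ i, 1 ≤ m i) ∧
        LinearIndependent K
          (fun p : Σ i : Fin t, Fin (2 * m i) => v p.1 (p.2 : ℕ)) ∧
        Submodule.span K
          (Set.range (fun p : Σ i : Fin t, Fin (2 * m i) => v p.1 (p.2 : ℕ))) = ⊤ ∧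
        (∀ i, ∀ n : ℕ, 2 * m i ≤ n → v i n = 0) ∧
        (∀ i i' : Fin t, ∀ n n' : ℕ,
          b (v i n) (v i' n') = if i = i' ∧ n + n' = 2 * m i - 1 then 1 else 0) ∧
        (∀ i, ∀ n : ℕ, n < 2 * m i →
          e (v i n) = if n = 0 ∨ n = m i then 0 else v i (n - 1)))
      ↔ (∀ x : V, b (e x) x = 0)) ∧
    ((∃ W Z : Submodule K V, IsCompl W Z ∧
        (∀ x ∈ W, ∀ y ∈ W, b x y = 0) ∧ (∀ x ∈ Z, ∀ y ∈ Z, b x y = 0) ∧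
        (∀ x ∈ W, e x ∈ W) ∧ (∀ x ∈ Z, e x ∈ Z))
      ↔ (∀ x : V, b (e x) x = 0)) := by
  constructor
  · constructor
    · rintro ⟨t, m, v, hm1, hind, hspan, hzero, hgram, heact⟩
      obtain ⟨W, Z, hc, hW, hZ, hWi, hZi⟩ :=
        decompWZ b hnd e t m v hm1 hspan hgram heact
      exact WZ_implies_q b halt e hsp W Z hc hW hZ hWi hZi
    · intro h3
      exact modelDecomp b halt hnd e hsp hnil h3
  · constructor
    · rintro ⟨W, Z, hc, hW, hZ, hWi, hZi⟩
      exact WZ_implies_q b halt e hsp W Z hc hW hZ hWi hZi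
    · intro h3
      obtain ⟨t, m, v, hm1, hind, hspan, hzero, hgram, heact⟩ :=
        modelDecomp b halt hnd e hsp hnil h3
      exact decompWZ b hnd e t m v hm1 hspan hgram heact
end

section
/- Let (V, b) be a finite-dimensional symplectic vector space over an algebraically closed field K of characteristic 2 and let e ∈ sp(V) be nilpotent. Then V is a direct sum of pairwise b-orthogonal nondegenerate e²-invariant subspaces U_1, …, U_t such that each (U_i, b, e²) is isomorphic, via a linear isomorphism that is an isometry and intertwines the nilpotent maps, to the nilpotent model W(m_i) for some integer m_i ≥ 1; in particular, V is the direct sum of two totally singular e²-invariant subspaces. -/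
open Finset Submodule

set_option linter.unusedSectionVars false
set_option maxHeartbeats 1000000

section helpers
variable {K : Type*} [Field K] [CharP K 2]
variable {V : Type*} [AddCommGroup V] [Module K V]

lemma stmt4_bsymm (b : V →ₗ[K] V →ₗ[K] K) (halt : ∀ v : V, b v v = 0) (x y : V) :
    b x y = b y x := by
  have h := halt (x + y)
  simp only [map_add, LinearMap.add_apply, halt, zero_add, add_zero] at h
  have h2 : b x y = -(b y x) := eq_neg_of_add_eq_zero_right h
  rw [h2, CharTwo.neg_eq]

lemma stmt4_span_orth (b : V →ₗ[K] V →ₗ[K] K) (s t : Set V)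
    (h : ∀ x ∈ s, ∀ y ∈ t, b x y = 0) :
    ∀ x ∈ span K s, ∀ y ∈ span K t, b x y = 0 := by
  intro x hx
  induction hx using span_induction with
  | mem x hxs =>
      intro y hy
      induction hy using span_induction with
      | mem y hyt => exact h x hxs y hyt
      | zero => simp
      | add _ _ _ _ h1 h2 => simp [h1, h2]
      | smul a _ _ h1 => simp [h1]
  | zero => intro y hy; simp
  | add _ _ _ _ h1 h2 => intro y hy; simp [h1 y hy, h2 y hy]
  | smul a _ _ h1 => intro y hy; simp [h1 y hy]

lemma stmt4_span_inv (g : Module.End K V) (s : Set V) (h : ∀ x ∈ s, g x ∈ span K s) :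
    ∀ x ∈ span K s, g x ∈ span K s := by
  intro x hx
  induction hx using span_induction with
  | mem x hxs => exact h x hxs
  | zero => simp
  | add _ _ _ _ h1 h2 => rw [map_add]; exact add_mem h1 h2
  | smul a _ _ h1 => rw [map_smul]; exact smul_mem _ a h1

lemma stmt4_corr_exists (m : ℕ) (hm : 1 ≤ m) (c : ℕ → K) (hc1 : c (m - 1) = 1)
    (hc0 : ∀ k, m ≤ k → c k = 0) :
    ∃ p : ℕ → K, ∀ s, s < m →
      ∑ j ∈ Finset.range m, p j * c (s + j) = if s + 1 = m then 1 else 0 := by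
  classical
  suffices H : ∀ r : ℕ, ∃ p : ℕ → K, ∀ s, s < m → m - 1 - r ≤ s →
      ∑ j ∈ Finset.range m, p j * c (s + j) = if s + 1 = m then 1 else 0 by
    obtain ⟨p, hp⟩ := H (m - 1)
    exact ⟨p, fun s hs => hp s hs (by omega)⟩
  intro r
  induction r with
  | zero =>
      refine ⟨fun j => if j = 0 then 1 else 0, fun s hs hs' => ?_⟩
      have hs0 : s = m - 1 := by omega
      have : ∑ j ∈ Finset.range m, (if j = 0 then (1:K) else 0) * c (s + j)
          = ∑ j ∈ Finset.range m, (if j = 0 then c (s + j) else 0) := by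
        apply Finset.sum_congr rfl; intro j _; by_cases hj : j = 0 <;> simp [hj]
      rw [this, Finset.sum_ite_eq' (Finset.range m) 0 (fun j => c (s + j))]
      rw [if_pos (Finset.mem_range.mpr (by omega))]
      rw [if_pos (by omega)]
      simpa [hs0] using hc1
  | succ r ih =>
      obtain ⟨p, hp⟩ := ih
      by_cases hdeg : m - 1 - (r + 1) = m - 1 - r
      · exact ⟨p, fun s hs hs' => hp s hs (by omega)⟩
      · have hr1 : r + 1 ≤ m - 1 := by omega
        set s₀ := m - 1 - (r + 1) with hs₀
        set a := ∑ j ∈ Finset.range m, p j * c (s₀ + j) with ha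
        refine ⟨fun j => if j = r + 1 then p j - a else p j, fun s hs hs' => ?_⟩
        have key : ∀ s' : ℕ, ∑ j ∈ Finset.range m,
            (if j = r + 1 then p j - a else p j) * c (s' + j)
            = (∑ j ∈ Finset.range m, p j * c (s' + j)) - a * c (s' + (r + 1)) := by
          intro s'
          have : ∀ j, (if j = r + 1 then p j - a else p j) * c (s' + j)
              = p j * c (s' + j) - (if j = r + 1 then a * c (s' + j) else 0) := by
            intro j; by_cases hj : j = r + 1 <;> simp [hj]; ring
          simp only [this]
          rw [Finset.sum_sub_distrib,
            Finset.sum_ite_eq' (Finset.range m) (r + 1) (fun j => a * c (s' + j)),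
            if_pos (Finset.mem_range.mpr (by omega))]
        rw [key]
        rcases Nat.lt_or_ge s s₀ with hlt | hge
        · omega
        rcases Nat.eq_or_lt_of_le hge with heq | hgt
        · have hcs : c (s + (r + 1)) = 1 := by
            have he : s + (r + 1) = m - 1 := by omega
            rw [he, hc1]
          have has : ∑ j ∈ Finset.range m, p j * c (s + j) = a := by rw [ha, ← heq]
          rw [has, hcs, mul_one, sub_self, if_neg (by omega)]
        · have hcs : c (s + (r + 1)) = 0 := hc0 _ (by omega)
          rw [hcs, mul_zero, sub_zero]
          exact hp s hs (by omega)

end helpers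

section main
variable {K : Type*} [Field K] [CharP K 2]
variable {V : Type*} [AddCommGroup V] [Module K V]

/-- The structure predicate for a submodule `S`. -/
def stmt4P (b : V →ₗ[K] V →ₗ[K] K) (f : Module.End K V) (S : Submodule K V) : Prop :=
  ∃ (t : ℕ) (m : Fin t → ℕ) (v : Fin t → ℕ → V),
    (∀ i n, v i n ∈ S) ∧
    (∀ i, 1 ≤ m i) ∧
    Submodule.span K
      (Set.range fun p : Σ i : Fin t, Fin (2 * m i) => v p.1 (p.2 : ℕ)) = S ∧
    (∀ i, ∀ n : ℕ, 2 * m i ≤ n → v i n = 0) ∧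
    (∀ i i' : Fin t, ∀ n n' : ℕ,
      b (v i n) (v i' n') = if i = i' ∧ n + n' = 2 * m i - 1 then 1 else 0) ∧
    (∀ i, ∀ n : ℕ, n < 2 * m i → f (v i n) = if n = 0 ∨ n = m i then 0 else v i (n - 1))

lemma stmt4_triv (b : V →ₗ[K] V →ₗ[K] K) (f : Module.End K V) :
    stmt4P b f (⊥ : Submodule K V) := by
  refine ⟨0, fun i => 1, fun i n => 0, ?_, ?_, ?_, ?_, ?_, ?_⟩
  · intro i; exact i.elim0
  · intro i; exact i.elim0
  · haveI : IsEmpty ((i : Fin 0) × Fin (2 * 1)) := ⟨fun p => p.1.elim0⟩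
    rw [Set.range_eq_empty, Submodule.span_empty]
  · intro i; exact i.elim0
  · intro i; exact i.elim0
  · intro i; exact i.elim0

lemma stmt4_main [FiniteDimensional K V]
    (b : V →ₗ[K] V →ₗ[K] K) (halt : ∀ v : V, b v v = 0)
    (f : Module.End K V)
    (hself : ∀ x y : V, b (f x) y = b x (f y))
    (hvfv : ∀ x : V, b x (f x) = 0)
    (hnil : IsNilpotent f) :
    ∀ (d : ℕ) (S : Submodule K V), Module.finrank K S ≤ d →
      (∀ x ∈ S, f x ∈ S) →
      (∀ x ∈ S, (∀ y ∈ S, b x y = 0) → x = 0) →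
      stmt4P b f S := by
  classical
  have hpow : ∀ (j : ℕ) (x y : V), b ((f ^ j) x) y = b x ((f ^ j) y) := by
    intro j
    induction j with
    | zero => intro x y; simp
    | succ j ih =>
        intro x y
        have h1 : (f ^ (j + 1)) x = (f ^ j) (f x) := by
          rw [pow_succ, Module.End.mul_apply]
        have h2 : (f ^ (j + 1)) y = f ((f ^ j) y) := by
          rw [pow_succ', Module.End.mul_apply]
        rw [h1, ih (f x) y, hself, h2]
  have hchain : ∀ (x : V) (i j : ℕ), b ((f ^ i) x) ((f ^ j) x) = 0 := by
    intro x i j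
    rw [hpow i]
    have h1 : (f ^ i) ((f ^ j) x) = (f ^ (i + j)) x := by
      rw [← Module.End.mul_apply, ← pow_add]
    rw [h1]
    rcases Nat.even_or_odd (i + j) with ⟨l, hl⟩ | ⟨l, hl⟩
    · have h2 : (f ^ (i + j)) x = (f ^ l) ((f ^ l) x) := by
        rw [← Module.End.mul_apply, ← pow_add, (by omega : l + l = i + j)]
      rw [h2, ← hpow l]
      exact halt _
    · have h2 : (f ^ (i + j)) x = (f ^ l) ((f ^ (l + 1)) x) := by
        rw [← Module.End.mul_apply, ← pow_add, (by omega : l + (l + 1) = i + j)]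
      rw [h2, ← hpow l]
      have h3 : (f ^ (l + 1)) x = f ((f ^ l) x) := by
        rw [pow_succ', Module.End.mul_apply]
      rw [h3]
      exact hvfv _
  intro d
  induction d with
  | zero =>
      intro S hrank hfS hndS
      have : S = ⊥ := Submodule.finrank_eq_zero.mp (Nat.le_zero.mp hrank)
      rw [this]; exact stmt4_triv b f
  | succ d ih =>
      intro S hrank hfS hndS
      by_cases hSbot : S = ⊥
      · rw [hSbot]; exact stmt4_triv b f
      obtain ⟨N, hN⟩ := hnil
      have hex : ∃ k, ∀ x ∈ S, (f ^ k) x = 0 := ⟨N, fun x _ => by simp [hN]⟩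
      set M := Nat.find hex with hMdef
      have hMall : ∀ x ∈ S, (f ^ M) x = 0 := Nat.find_spec hex
      have hM1 : 1 ≤ M := by
        by_contra h
        have hM0 : M = 0 := by omega
        apply hSbot
        rw [Submodule.eq_bot_iff]
        intro x hx
        have h2 := hMall x hx
        rwa [hM0, pow_zero, Module.End.one_apply] at h2
      have hvex : ¬ ∀ x ∈ S, (f ^ (M - 1)) x = 0 := Nat.find_min hex (by omega)
      push_neg at hvex
      obtain ⟨v, hvS, hv⟩ := hvex
      have hfSk : ∀ (k : ℕ) (x : V), x ∈ S → (f ^ k) x ∈ S := by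
        intro k
        induction k with
        | zero => intro x hx; simpa using hx
        | succ k ihk =>
            intro x hx
            have h2 : (f ^ (k + 1)) x = f ((f ^ k) x) := by
              rw [pow_succ', Module.End.mul_apply]
            rw [h2]; exact hfS _ (ihk x hx)
      have hwex : ∃ w ∈ S, b ((f ^ (M - 1)) v) w ≠ 0 := by
        by_contra h
        push_neg at h
        exact hv (hndS _ (hfSk _ _ hvS) h)
      obtain ⟨w₁, hw₁S, hw₁⟩ := hwex
      set w₀ := (b ((f ^ (M - 1)) v) w₁)⁻¹ • w₁ with hw₀def
      have hw₀S : w₀ ∈ S := S.smul_mem _ hw₁S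
      have hc1 : b ((f ^ (M - 1)) v) w₀ = 1 := by
        rw [hw₀def, map_smul, smul_eq_mul, inv_mul_cancel₀ hw₁]
      have hvk : ∀ k, M ≤ k → (f ^ k) v = 0 := by
        intro k hk
        have h2 : (f ^ k) v = (f ^ (k - M)) ((f ^ M) v) := by
          rw [← Module.End.mul_apply, ← pow_add, (by omega : k - M + M = k)]
        rw [h2, hMall v hvS, map_zero]
      set c : ℕ → K := fun k => b ((f ^ k) v) w₀ with hcdef
      have hc0 : ∀ k, M ≤ k → c k = 0 := by
        intro k hk
        simp only [hcdef]
        rw [hvk k hk]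
        simp
      obtain ⟨p, hp⟩ := stmt4_corr_exists M hM1 c hc1 hc0
      set w' := ∑ j ∈ Finset.range M, p j • (f ^ j) w₀ with hw'def
      have hw'S : w' ∈ S := Submodule.sum_mem _ fun j _ => S.smul_mem _ (hfSk _ _ hw₀S)
      have hKey1 : ∀ s : ℕ, b ((f ^ s) v) w' = if s + 1 = M then 1 else 0 := by
        intro s
        rcases Nat.lt_or_ge s M with hs | hs
        · have h2 : b ((f ^ s) v) w' = ∑ j ∈ Finset.range M, p j * c (s + j) := by
            rw [hw'def, map_sum]
            refine Finset.sum_congr rfl fun j _ => ?_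
            rw [map_smul, smul_eq_mul]
            congr 1
            rw [← hpow j]
            have h3 : (f ^ j) ((f ^ s) v) = (f ^ (s + j)) v := by
              rw [← Module.End.mul_apply, ← pow_add, Nat.add_comm j s]
            rw [h3]
          rw [h2, hp s hs]
        · rw [hvk s hs]
          have h2 : s + 1 ≠ M := by omega
          simp [h2]
      have hfkw' : ∀ k : ℕ, (f ^ k) w' = ∑ j ∈ Finset.range M, p j • (f ^ (k + j)) w₀ := by
        intro k
        rw [hw'def, map_sum]
        refine Finset.sum_congr rfl fun j _ => ?_
        rw [map_smul, ← Module.End.mul_apply, ← pow_add]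
      have hKey2w : ∀ i j : ℕ, b ((f ^ i) w') ((f ^ j) w') = 0 := by
        intro i j
        rw [hfkw' i, hfkw' j]
        simp only [map_sum, map_smul, LinearMap.coe_sum, Finset.sum_apply,
          LinearMap.smul_apply, smul_eq_mul]
        apply Finset.sum_eq_zero
        intro a _
        rw [Finset.mul_sum]
        apply Finset.sum_eq_zero
        intro e _
        rw [hchain w₀]
        ring
      have hvw : ∀ i j : ℕ, b ((f ^ i) v) ((f ^ j) w') = if i + j + 1 = M then 1 else 0 := by
        intro i j
        rw [← hpow j]
        have h2 : (f ^ j) ((f ^ i) v) = (f ^ (i + j)) v := by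
          rw [← Module.End.mul_apply, ← pow_add, Nat.add_comm j i]
        rw [h2, hKey1]
      set u : ℕ → V := fun n =>
        if n < M then (f ^ (M - 1 - n)) v
        else if n < 2 * M then (f ^ (2 * M - 1 - n)) w' else 0 with hudef
      have huS : ∀ n, u n ∈ S := by
        intro n
        simp only [hudef]
        split
        · exact hfSk _ _ hvS
        · split
          · exact hfSk _ _ hw'S
          · exact S.zero_mem
      have hu0 : ∀ n, 2 * M ≤ n → u n = 0 := by
        intro n hn
        simp only [hudef]
        rw [if_neg (by omega), if_neg (by omega)]
      have hgramU : ∀ n n' : ℕ, b (u n) (u n') = if n + n' = 2 * M - 1 then 1 else 0 := by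
        have hmain : ∀ n n' : ℕ, n < M → M ≤ n' → n' < 2 * M →
            b (u n) (u n') = if n + n' = 2 * M - 1 then 1 else 0 := by
          intro n n' h1 h2 h3
          simp only [hudef]
          rw [if_pos h1, if_neg (by omega), if_pos h3, hvw]
          by_cases h : n + n' = 2 * M - 1
          · rw [if_pos (by omega), if_pos h]
          · rw [if_neg (by omega), if_neg h]
        intro n n'
        rcases Nat.lt_or_ge n (2 * M) with hn2 | hn2
        swap
        · rw [hu0 n hn2]
          have h2 : ¬ (n + n' = 2 * M - 1) := by omega
          simp [h2]
        rcases Nat.lt_or_ge n' (2 * M) with hn'2 | hn'2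
        swap
        · rw [hu0 n' hn'2]
          have h2 : ¬ (n + n' = 2 * M - 1) := by omega
          simp [h2]
        rcases Nat.lt_or_ge n M with hn | hn
        · rcases Nat.lt_or_ge n' M with hn' | hn'
          · simp only [hudef]
            rw [if_pos hn, if_pos hn', hchain, if_neg (by omega)]
          · exact hmain n n' hn hn' hn'2
        · rcases Nat.lt_or_ge n' M with hn' | hn'
          · rw [stmt4_bsymm b halt, hmain n' n hn' hn hn2]
            by_cases h : n + n' = 2 * M - 1
            · rw [if_pos (by omega), if_pos h]
            · rw [if_neg (by omega), if_neg h]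
          · simp only [hudef]
            rw [if_neg (by omega), if_pos hn2, if_neg (by omega), if_pos hn'2,
              hKey2w, if_neg (by omega)]
      have hcomp : ∀ (k : ℕ) (x : V), f ((f ^ k) x) = (f ^ (k + 1)) x := by
        intro k x
        rw [← Module.End.mul_apply, ← pow_succ']
      have haction : ∀ n, n < 2 * M → f (u n) = if n = 0 ∨ n = M then 0 else u (n - 1) := by
        intro n hn
        rcases eq_or_ne n 0 with h0 | h0
        · subst h0
          have hL : u 0 = (f ^ (M - 1 - 0)) v := by
            simp only [hudef]; rw [if_pos (by omega)]
          rw [hL, hcomp, if_pos (Or.inl rfl)]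
          have h2 : M - 1 - 0 + 1 = M := by omega
          rw [h2]
          exact hvk M le_rfl
        rcases eq_or_ne n M with hMeq | hMeq
        · subst hMeq
          have hL : u M = (f ^ (2 * M - 1 - M)) w' := by
            simp only [hudef]; rw [if_neg (by omega), if_pos (by omega)]
          rw [hL, hcomp, if_pos (Or.inr rfl)]
          have h2 : 2 * M - 1 - M + 1 = M := by omega
          rw [h2]
          exact hMall w' hw'S
        rcases Nat.lt_or_ge n M with hlt | hge
        · have hL : u n = (f ^ (M - 1 - n)) v := by
            simp only [hudef]; rw [if_pos hlt]
          have hR : u (n - 1) = (f ^ (M - 1 - (n - 1))) v := by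
            simp only [hudef]; rw [if_pos (by omega)]
          rw [hL, hcomp, if_neg (by omega), hR]
          have h2 : M - 1 - n + 1 = M - 1 - (n - 1) := by omega
          rw [h2]
        · have hL : u n = (f ^ (2 * M - 1 - n)) w' := by
            simp only [hudef]; rw [if_neg (by omega), if_pos hn]
          have hR : u (n - 1) = (f ^ (2 * M - 1 - (n - 1))) w' := by
            simp only [hudef]; rw [if_neg (by omega), if_pos (by omega)]
          rw [hL, hcomp, if_neg (by omega), hR]
          have h2 : 2 * M - 1 - n + 1 = 2 * M - 1 - (n - 1) := by omega
          rw [h2]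
      set U := Submodule.span K (Set.range fun q : Fin (2 * M) => u (q : ℕ)) with hUdef
      have hUS : U ≤ S := by
        rw [hUdef, Submodule.span_le]
        rintro x ⟨q, rfl⟩
        exact huS q
      set S' : Submodule K V :=
        { carrier := {x | x ∈ S ∧ ∀ n : ℕ, b (u n) x = 0}
          add_mem' := fun hx hy => ⟨S.add_mem hx.1 hy.1, fun n => by
            rw [map_add, hx.2 n, hy.2 n, add_zero]⟩
          zero_mem' := ⟨S.zero_mem, fun n => map_zero _⟩
          smul_mem' := fun a x hx => ⟨S.smul_mem a hx.1, fun n => by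
            rw [map_smul, hx.2 n, smul_zero]⟩ } with hS'def
      have hmemS' : ∀ x : V, x ∈ S' ↔ (x ∈ S ∧ ∀ n : ℕ, b (u n) x = 0) := fun x => Iff.rfl
      have hS'le : S' ≤ S := fun x hx => ((hmemS' x).1 hx).1
      have hS'f : ∀ x ∈ S', f x ∈ S' := by
        intro x hx
        rw [hmemS'] at hx ⊢
        refine ⟨hfS x hx.1, fun n => ?_⟩
        rw [← hself]
        rcases Nat.lt_or_ge n (2 * M) with hn | hn
        · rw [haction n hn]
          split
          · simp
          · exact hx.2 _
        · rw [hu0 n hn]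
          have : f (0 : V) = 0 := map_zero f
          rw [this]
          simp
      have hdecomp : ∀ x ∈ S, ∃ y ∈ U, ∃ z ∈ S', x = y + z := by
        intro x hx
        set y := ∑ n ∈ Finset.range (2 * M), (b (u (2 * M - 1 - n)) x) • u n with hydef
        have hyU : y ∈ U := by
          refine Submodule.sum_mem _ fun n hn => Submodule.smul_mem _ _ ?_
          exact Submodule.subset_span ⟨⟨n, Finset.mem_range.mp hn⟩, rfl⟩
        have hbz : ∀ k : ℕ, b (u k) (x - y) = 0 := by
          intro k
          rcases Nat.lt_or_ge k (2 * M) with hk | hk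
          swap
          · rw [hu0 k hk]; simp
          rw [map_sub]
          have hby : b (u k) y = b (u k) x := by
            rw [hydef, map_sum]
            have hterm : ∀ n ∈ Finset.range (2 * M),
                b (u k) ((b (u (2 * M - 1 - n)) x) • u n)
                = if n = 2 * M - 1 - k then b (u k) x else 0 := by
              intro n hn
              have hn' := Finset.mem_range.mp hn
              rw [map_smul, smul_eq_mul, hgramU]
              rcases eq_or_ne n (2 * M - 1 - k) with he | he
              · rw [if_pos (by omega), mul_one, if_pos he]
                have h3 : 2 * M - 1 - n = k := by omega
                rw [h3]
              · rw [if_neg (by omega), mul_zero, if_neg he]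
            rw [Finset.sum_congr rfl hterm,
              Finset.sum_ite_eq' (Finset.range (2 * M)) (2 * M - 1 - k)
                (fun _ => b (u k) x),
              if_pos (Finset.mem_range.mpr (by omega))]
          rw [hby, sub_self]
        refine ⟨y, hyU, x - y, ?_, by abel⟩
        rw [hmemS']
        exact ⟨Submodule.sub_mem S hx (hUS hyU), hbz⟩
      have hsup : U ⊔ S' = S := by
        apply le_antisymm (sup_le hUS hS'le)
        intro x hx
        obtain ⟨y, hy, z, hz, rfl⟩ := hdecomp x hx
        exact Submodule.add_mem _ (Submodule.mem_sup_left hy) (Submodule.mem_sup_right hz)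
      have hUorthS' : ∀ x ∈ U, ∀ z ∈ S', b x z = 0 := by
        intro x hx
        rw [hUdef] at hx
        induction hx using Submodule.span_induction with
        | mem a ha =>
            obtain ⟨q, rfl⟩ := ha
            intro z hz
            exact ((hmemS' z).1 hz).2 q
        | zero => intro z hz; simp
        | add a a' _ _ h1 h2 =>
            intro z hz
            rw [map_add, LinearMap.add_apply, h1 z hz, h2 z hz, add_zero]
        | smul r a _ h1 =>
            intro z hz
            rw [map_smul, LinearMap.smul_apply, h1 z hz, smul_zero]
      have hdisj : U ⊓ S' = ⊥ := by
        rw [Submodule.eq_bot_iff]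
        intro y hy
        rw [Submodule.mem_inf] at hy
        apply hndS y (hUS hy.1)
        intro zz hzz
        obtain ⟨zU, hzU, z', hz', rfl⟩ := hdecomp zz hzz
        rw [map_add, stmt4_bsymm b halt y zU, hUorthS' zU hzU y hy.2,
          hUorthS' y hy.1 z' hz', add_zero]
      have hndS' : ∀ x ∈ S', (∀ y ∈ S', b x y = 0) → x = 0 := by
        intro x hx hall
        apply hndS x (hS'le hx)
        intro zz hzz
        obtain ⟨zU, hzU, z', hz', rfl⟩ := hdecomp zz hzz
        rw [map_add, stmt4_bsymm b halt x zU, hUorthS' zU hzU x hx,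
          hall z' hz', add_zero]
      have hrankS' : Module.finrank K S' ≤ d := by
        have h1 := Submodule.finrank_sup_add_finrank_inf_eq U S'
        rw [hsup, hdisj] at h1
        have hvU : v ∈ U := by
          have huMv : u (M - 1) = v := by
            simp only [hudef]
            rw [if_pos (by omega)]
            have h3 : M - 1 - (M - 1) = 0 := by omega
            rw [h3, pow_zero, Module.End.one_apply]
          exact Submodule.subset_span ⟨⟨M - 1, by omega⟩, huMv⟩
        have hUne : Module.finrank K U ≠ 0 := by
          intro h0
          have hUbot : U = ⊥ := Submodule.finrank_eq_zero.mp h0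
          rw [hUbot, Submodule.mem_bot] at hvU
          exact hv (by rw [hvU, map_zero])
        have hbot0 : Module.finrank K (⊥ : Submodule K V) = 0 := finrank_bot K V
        omega
      obtain ⟨t', m', v', hmem', hm1', hspan', hvan', hgram', hact'⟩ :=
        ih S' hrankS' hS'f hndS'
      obtain ⟨mm, hmm0, hmms⟩ : ∃ mm : Fin (t' + 1) → ℕ,
          mm 0 = M ∧ ∀ j : Fin t', mm j.succ = m' j :=
        ⟨Fin.cons M m', rfl, fun j => rfl⟩
      obtain ⟨vv, hvv0, hvvs⟩ : ∃ vv : Fin (t' + 1) → ℕ → V,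
          vv 0 = u ∧ ∀ j : Fin t', vv j.succ = v' j :=
        ⟨Fin.cons (α := fun _ => ℕ → V) u v', rfl, fun j => rfl⟩
      have hmemAll : ∀ (i : Fin (t' + 1)) (n : ℕ), vv i n ∈ S := by
        intro i n
        induction i using Fin.cases with
        | zero => rw [hvv0]; exact huS n
        | succ j => rw [hvvs]; exact hS'le (hmem' j n)
      have h1All : ∀ i : Fin (t' + 1), 1 ≤ mm i := by
        intro i
        induction i using Fin.cases with
        | zero => rw [hmm0]; exact hM1
        | succ j => rw [hmms]; exact hm1' j
      have hUle : U ≤ Submodule.span K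
          (Set.range fun p : Σ i : Fin (t' + 1), Fin (2 * mm i) => vv p.1 (p.2 : ℕ)) := by
        rw [hUdef, Submodule.span_le]
        rintro x ⟨q, rfl⟩
        apply Submodule.subset_span
        refine ⟨⟨0, ⟨(q : ℕ), ?_⟩⟩, ?_⟩
        · rw [hmm0]; exact q.2
        · simp [hvv0]
      have hS'span : S' ≤ Submodule.span K
          (Set.range fun p : Σ i : Fin (t' + 1), Fin (2 * mm i) => vv p.1 (p.2 : ℕ)) := by
        rw [← hspan', Submodule.span_le]
        rintro x ⟨q, rfl⟩
        apply Submodule.subset_span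
        refine ⟨⟨q.1.succ, ⟨(q.2 : ℕ), ?_⟩⟩, ?_⟩
        · rw [hmms]; exact q.2.2
        · simp [hvvs]
      have hspanAll : Submodule.span K
          (Set.range fun p : Σ i : Fin (t' + 1), Fin (2 * mm i) => vv p.1 (p.2 : ℕ)) = S := by
        apply le_antisymm
        · rw [Submodule.span_le]
          rintro x ⟨p, rfl⟩
          exact hmemAll p.1 p.2
        · intro x hx
          obtain ⟨y, hy, z, hz, rfl⟩ := hdecomp x hx
          exact Submodule.add_mem _ (hUle hy) (hS'span hz)
      have hvanAll : ∀ (i : Fin (t' + 1)) (n : ℕ), 2 * mm i ≤ n → vv i n = 0 := by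
        intro i n
        induction i using Fin.cases with
        | zero =>
          intro hn
          rw [hmm0] at hn
          rw [hvv0]
          exact hu0 n hn
        | succ j =>
          intro hn
          rw [hmms] at hn
          rw [hvvs]
          exact hvan' j n hn
      have hbuv' : ∀ (j : Fin t') (n n' : ℕ), b (u n) (v' j n') = 0 := by
        intro j n n'
        rcases Nat.lt_or_ge n' (2 * m' j) with h | h
        · exact ((hmemS' _).1 (hmem' j n')).2 n
        · rw [hvan' j n' h, map_zero]
      have hgramAll : ∀ (i i' : Fin (t' + 1)) (n n' : ℕ),
          b (vv i n) (vv i' n')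
            = if i = i' ∧ n + n' = 2 * mm i - 1 then 1 else 0 := by
        intro i i' n n'
        induction i using Fin.cases with
        | zero =>
          induction i' using Fin.cases with
          | zero =>
            rw [hvv0, hmm0, hgramU]
            simp
          | succ j =>
            rw [hvv0, hvvs, hbuv', if_neg (fun h => (Fin.succ_ne_zero j) h.1.symm)]
        | succ j =>
          induction i' using Fin.cases with
          | zero =>
            rw [hvvs, hvv0, stmt4_bsymm b halt, hbuv',
              if_neg (fun h => (Fin.succ_ne_zero j) h.1)]
          | succ j' =>
            rw [hvvs, hvvs, hmms, hgram']
            simp [Fin.succ_inj]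
      have hactAll : ∀ (i : Fin (t' + 1)) (n : ℕ), n < 2 * mm i →
          f (vv i n) = if n = 0 ∨ n = mm i then 0 else vv i (n - 1) := by
        intro i n
        induction i using Fin.cases with
        | zero =>
          intro hn
          rw [hmm0] at hn
          rw [hvv0, hmm0]
          exact haction n hn
        | succ j =>
          intro hn
          rw [hmms] at hn
          rw [hvvs, hmms]
          exact hact' j n hn
      exact ⟨t' + 1, mm, vv, hmemAll, h1All, hspanAll, hvanAll, hgramAll, hactAll⟩

end main

/-- Lemma: for a nilpotent `e ∈ sp(V)` over an algebraically closed field of characteristic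
two, `V ↓ K[e²]` is an orthogonal direct sum of subspaces isometric to the nilpotent models
`W(mᵢ)` (encoded by the existence of a family of basis vectors with the prescribed form
values and `e²`-action); in particular `V` is the direct sum of two totally singular
`e²`-invariant subspaces. -/
theorem stmt4 (K : Type*) [Field K] [IsAlgClosed K] [CharP K 2]
    (V : Type*) [AddCommGroup V] [Module K V] [FiniteDimensional K V]
    (b : V →ₗ[K] V →ₗ[K] K)
    (halt : ∀ v : V, b v v = 0)
    (hnd : ∀ v : V, (∀ w : V, b v w = 0) → v = 0)
    (e : Module.End K V)
    (hsp : ∀ v w : V, b (e v) w + b v (e w) = 0)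
    (hnil : IsNilpotent e) :
    (∃ (t : ℕ) (m : Fin t → ℕ) (v : Fin t → ℕ → V),
        (∀ i, 1 ≤ m i) ∧
        LinearIndependent K
          (fun p : Σ i : Fin t, Fin (2 * m i) => v p.1 (p.2 : ℕ)) ∧
        Submodule.span K
          (Set.range (fun p : Σ i : Fin t, Fin (2 * m i) => v p.1 (p.2 : ℕ))) = ⊤ ∧
        (∀ i, ∀ n : ℕ, 2 * m i ≤ n → v i n = 0) ∧
        (∀ i i' : Fin t, ∀ n n' : ℕ,
          b (v i n) (v i' n') = if i = i' ∧ n + n' = 2 * m i - 1 then 1 else 0) ∧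
        (∀ i, ∀ n : ℕ, n < 2 * m i →
          (e ^ 2) (v i n) = if n = 0 ∨ n = m i then 0 else v i (n - 1))) ∧
    (∃ W Z : Submodule K V, IsCompl W Z ∧
        (∀ x ∈ W, ∀ y ∈ W, b x y = 0) ∧ (∀ x ∈ Z, ∀ y ∈ Z, b x y = 0) ∧
        (∀ x ∈ W, (e ^ 2) x ∈ W) ∧ (∀ x ∈ Z, (e ^ 2) x ∈ Z)) := by
  classical
  have hsp' : ∀ x y : V, b (e x) y = b x (e y) := by
    intro x y
    have h := hsp x y
    have h2 : b (e x) y = -(b x (e y)) := eq_neg_of_add_eq_zero_left h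
    rw [h2, CharTwo.neg_eq]
  set f : Module.End K V := e ^ 2 with hfdef
  have hfapp : ∀ x : V, f x = e (e x) := by
    intro x; rw [hfdef, pow_two, Module.End.mul_apply]
  have hself : ∀ x y : V, b (f x) y = b x (f y) := by
    intro x y; rw [hfapp, hfapp, hsp', hsp']
  have hvfv : ∀ x : V, b x (f x) = 0 := by
    intro x; rw [hfapp, ← hsp']; exact halt (e x)
  have hnil2 : IsNilpotent f := by
    obtain ⟨n, hn⟩ := hnil
    refine ⟨n, ?_⟩
    rw [hfdef, ← pow_mul, mul_comm, pow_mul, hn]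
    simp
  have hmain := stmt4_main b halt f hself hvfv hnil2 (Module.finrank K V) ⊤
    (finrank_top K V).le (fun x _ => trivial)
    (fun x _ h => hnd x (fun w => h w trivial))
  obtain ⟨t, m, v, hmem, hm1, hspan, hvan, hgram, hact⟩ := hmain
  have hLI : LinearIndependent K
      (fun p : Σ i : Fin t, Fin (2 * m i) => v p.1 (p.2 : ℕ)) := by
    rw [Fintype.linearIndependent_iff]
    intro g hg q
    obtain ⟨q1, q2⟩ := q
    have hq2 : (q2 : ℕ) < 2 * m q1 := q2.2
    have hmq := hm1 q1
    have h0 := congrArg (b (v q1 (2 * m q1 - 1 - (q2 : ℕ)))) hg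
    rw [map_sum, map_zero] at h0
    have hterm : ∀ p : Σ i : Fin t, Fin (2 * m i),
        b (v q1 (2 * m q1 - 1 - (q2 : ℕ))) (g p • v p.1 (p.2 : ℕ))
          = if p = ⟨q1, q2⟩ then g p else 0 := by
      intro p
      rw [map_smul, smul_eq_mul, hgram]
      rcases eq_or_ne p ⟨q1, q2⟩ with he | he
      · subst he
        rw [if_pos ⟨rfl, show (2 * m q1 - 1 - (q2 : ℕ)) + ((q2 : ℕ)) = 2 * m q1 - 1
          by omega⟩, mul_one, if_pos rfl]
      · have hcond : ¬ (q1 = p.1 ∧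
            (2 * m q1 - 1 - (q2 : ℕ)) + (p.2 : ℕ) = 2 * m q1 - 1) := by
          rintro ⟨h1, h2⟩
          apply he
          obtain ⟨p1, p2⟩ := p
          simp only at h1 h2
          cases h1
          have hp2 : (p2 : ℕ) < 2 * m q1 := p2.2
          exact congrArg (Sigma.mk q1) (Fin.ext (by omega))
        rw [if_neg hcond, mul_zero, if_neg he]
    have hsum : ∑ p : Σ i : Fin t, Fin (2 * m i),
        b (v q1 (2 * m q1 - 1 - (q2 : ℕ))) (g p • v p.1 (p.2 : ℕ)) = g ⟨q1, q2⟩ := by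
      rw [Finset.sum_congr rfl (fun p _ => hterm p),
        Finset.sum_ite_eq' Finset.univ (⟨q1, q2⟩ : Σ i : Fin t, Fin (2 * m i)) g,
        if_pos (Finset.mem_univ _)]
    rw [hsum] at h0
    exact h0
  set fam := fun p : Σ i : Fin t, Fin (2 * m i) => v p.1 (p.2 : ℕ) with hfam
  set sIdx : Set (Σ i : Fin t, Fin (2 * m i)) := {p | (p.2 : ℕ) < m p.1} with hsIdx
  refine ⟨⟨t, m, v, hm1, hLI, hspan, hvan, hgram, hact⟩,
    Submodule.span K (fam '' sIdx), Submodule.span K (fam '' sIdxᶜ), ?_, ?_, ?_, ?_, ?_⟩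
  · constructor
    · exact hLI.disjoint_span_image disjoint_compl_right
    · rw [codisjoint_iff, ← Submodule.span_union, ← Set.image_union,
        Set.union_compl_self, Set.image_univ]
      exact hspan
  · -- W totally singular
    apply stmt4_span_orth b
    rintro x ⟨p, hp, rfl⟩ y ⟨q, hq, rfl⟩
    rw [hfam]
    simp only [hsIdx, Set.mem_setOf_eq] at hp hq
    rw [hgram]
    have h1 := hm1 p.1
    refine if_neg ?_
    rintro ⟨he, hsum⟩
    have hmeq : m p.fst = m q.fst := by rw [he]
    omega
  · -- Z totally singular
    apply stmt4_span_orth b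
    rintro x ⟨p, hp, rfl⟩ y ⟨q, hq, rfl⟩
    rw [hfam]
    simp only [Set.mem_compl_iff, hsIdx, Set.mem_setOf_eq] at hp hq
    have hp2 : (p.2 : ℕ) < 2 * m p.1 := p.2.2
    have hq2 : (q.2 : ℕ) < 2 * m q.1 := q.2.2
    rw [hgram]
    refine if_neg ?_
    rintro ⟨he, hsum⟩
    have hmeq : m p.fst = m q.fst := by rw [he]
    omega
  · -- W invariant
    apply stmt4_span_inv f
    rintro x ⟨p, hp, rfl⟩
    simp only [hsIdx, Set.mem_setOf_eq] at hp
    have hp2 : (p.2 : ℕ) < 2 * m p.1 := p.2.2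
    have h1 := hm1 p.1
    rw [hfam, hact p.1 (p.2 : ℕ) hp2]
    split_ifs with h
    · exact Submodule.zero_mem _
    · apply Submodule.subset_span
      refine ⟨⟨p.1, ⟨(p.2 : ℕ) - 1, by omega⟩⟩, ?_, rfl⟩
      simp only [hsIdx, Set.mem_setOf_eq]
      omega
  · -- Z invariant
    apply stmt4_span_inv f
    rintro x ⟨p, hp, rfl⟩
    simp only [Set.mem_compl_iff, hsIdx, Set.mem_setOf_eq] at hp
    have hp2 : (p.2 : ℕ) < 2 * m p.1 := p.2.2
    have h1 := hm1 p.1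
    rw [hfam, hact p.1 (p.2 : ℕ) hp2]
    split_ifs with h
    · exact Submodule.zero_mem _
    · apply Submodule.subset_span
      refine ⟨⟨p.1, ⟨(p.2 : ℕ) - 1, by omega⟩⟩, ?_, rfl⟩
      simp only [Set.mem_compl_iff, hsIdx, Set.mem_setOf_eq]
      omega
end

section
/- Let (V, b) be a finite-dimensional symplectic vector space over an algebraically closed field K of characteristic 2 and let u ∈ Sp(V) be unipotent. Suppose V = U_1 ⊕ ⋯ ⊕ U_t where the U_i are pairwise b-orthogonal nondegenerate u-invariant subspaces. Let ũ denote the map induced by u on S²(V), let ũ_i denote the map induced by the restriction of u on S²(U_i), let φ : S²(V) → K be determined by φ(xy) = b(x, y), and let φ_i : S²(U_i) → K be determined by the restriction of b. Then for every integer m ≥ 0: ker(ũ − 1)^m ⊆ ker φ if and only if ker(ũ_i − 1)^m ⊆ ker φ_i for all 1 ≤ i ≤ t. -/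
/-!
The inclusion `S²(Uᵢ) → S²(V)` and the projection `S²(V) → S²(Uᵢ)` coming from `V = ⨁ Uᵢ` both
intertwine `ũ` with `ũᵢ`, hence map the kernels of `(ũ - 1)^m` and `(ũᵢ - 1)^m` into each other.
Since `φ` restricts to `φᵢ` and, by orthogonality of the `Uᵢ`, `φ = ∑ᵢ φᵢ ∘ projᵢ`, the criterion
for `φ` is equivalent to the criteria for all the `φᵢ`.
-/

open scoped TensorProduct

namespace SymSq

variable {K V W P : Type*} [Field K] [AddCommGroup V] [Module K V] [AddCommGroup W] [Module K W]
  [AddCommGroup P] [Module K P]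

theorem linearMap_ext {f g : SymSq K V →ₗ[K] P}
    (h : ∀ x y : V, f (SymSq.mul x y) = g (SymSq.mul x y)) : f = g :=
  Submodule.linearMap_qext _ (TensorProduct.ext' h)

noncomputable def map (f : V →ₗ[K] W) : SymSq K V →ₗ[K] SymSq K W :=
  Submodule.mapQ _ _ (TensorProduct.map f f) <| Submodule.span_le.mpr <| by
    rintro _ ⟨x, y, rfl⟩
    exact Submodule.subset_span ⟨f x, f y, by simp⟩

@[simp]
theorem map_mul (f : V →ₗ[K] W) (x y : V) :
    map f (SymSq.mul x y) = SymSq.mul (f x) (f y) := by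
  simp [map, SymSq.mul]

end SymSq

namespace DirectSum.IsInternal

variable {K V P ι : Type*} [Field K] [AddCommGroup V] [Module K V] [AddCommGroup P] [Module K P]
  [DecidableEq ι] {U : ι → Submodule K V} (h : IsInternal U)

noncomputable def proj (i : ι) : V →ₗ[K] U i :=
  component K ι (fun i => U i) i ∘ₗ
    (LinearEquiv.ofBijective (coeLinearMap U) h).symm.toLinearMap

@[simp]
theorem proj_coe_self {i : ι} (w : U i) : h.proj i w = w :=
  h.ofBijective_coeLinearMap_same w

theorem proj_coe_of_ne {i j : ι} (hji : j ≠ i) (w : U j) : h.proj i w = 0 :=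
  h.ofBijective_coeLinearMap_of_ne hji w

variable [Fintype ι]

theorem proj_sum_coe (w : ∀ i, U i) (i : ι) : h.proj i (∑ j, (w j : V)) = w i := by
  rw [map_sum, Finset.sum_eq_single i (fun j _ hji => h.proj_coe_of_ne hji _) (by simp),
    proj_coe_self]

theorem sum_coe_proj (x : V) : ∑ i, (h.proj i x : V) = x := by
  set e := LinearEquiv.ofBijective (coeLinearMap U) h
  conv_rhs => rw [← e.apply_symm_apply x, ← sum_univ_of (e.symm x), map_sum]
  exact Finset.sum_congr rfl fun i _ => (coeLinearMap_of U i _).symm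

theorem proj_apply_of_restrict {f : Module.End K V} {g : ∀ i, Module.End K (U i)}
    (hfg : ∀ i (x : U i), (g i x : V) = f x) (i : ι) (x : V) :
    h.proj i (f x) = g i (h.proj i x) := by
  conv_lhs => rw [← h.sum_coe_proj x, map_sum]
  simp_rw [← hfg]
  exact h.proj_sum_coe _ i

theorem bilin_eq_sum_proj {b : V →ₗ[K] V →ₗ[K] P}
    (horth : ∀ i j, i ≠ j → ∀ x ∈ U i, ∀ y ∈ U j, b x y = 0) (x y : V) :
    b x y = ∑ i, b (h.proj i x) (h.proj i y) := by
  conv_lhs => rw [← h.sum_coe_proj x, ← h.sum_coe_proj y]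
  simp_rw [map_sum, LinearMap.sum_apply]
  rw [Finset.sum_comm]
  refine Finset.sum_congr rfl fun i _ => Finset.sum_eq_single i (fun j _ hji => ?_) (by simp)
  exact horth i j hji.symm _ (h.proj i x).2 _ (h.proj j y).2

end DirectSum.IsInternal

namespace LinearMap

variable {R M N P ι : Type*} [Semiring R] [AddCommMonoid M] [Module R M] [AddCommMonoid N]
  [Module R N] [AddCommMonoid P] [Module R P] {Mᵢ : ι → Type*} [∀ i, AddCommMonoid (Mᵢ i)]
  [∀ i, Module R (Mᵢ i)]

theorem mem_ker_pow_of_comp_eq {f : M →ₗ[R] N} {g : Module.End R M} {g' : Module.End R N}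
    (hfg : g' ∘ₗ f = f ∘ₗ g) {k : ℕ} {x : M} (hx : x ∈ ker (g ^ k)) : f x ∈ ker (g' ^ k) := by
  rw [mem_ker, ← comp_apply, Module.End.commute_pow_left_of_commute hfg, comp_apply,
    mem_ker.mp hx, map_zero]

theorem ker_pow_le_ker_iff_of_decomposition [Fintype ι] (g : Module.End R M)
    (gᵢ : ∀ i, Module.End R (Mᵢ i)) (φ : M →ₗ[R] P) (φᵢ : ∀ i, Mᵢ i →ₗ[R] P)
    (inc : ∀ i, Mᵢ i →ₗ[R] M) (proj : ∀ i, M →ₗ[R] Mᵢ i)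
    (hinc : ∀ i, g ∘ₗ inc i = inc i ∘ₗ gᵢ i) (hproj : ∀ i, gᵢ i ∘ₗ proj i = proj i ∘ₗ g)
    (hφinc : ∀ i, φ ∘ₗ inc i = φᵢ i) (hφ : φ = ∑ i, φᵢ i ∘ₗ proj i) (k : ℕ) :
    ker (g ^ k) ≤ ker φ ↔ ∀ i, ker (gᵢ i ^ k) ≤ ker (φᵢ i) := by
  refine ⟨fun H i x hx => ?_, fun H x hx => ?_⟩
  · rw [mem_ker, ← hφinc, comp_apply]
    exact H (mem_ker_pow_of_comp_eq (hinc i) hx)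
  · rw [mem_ker, hφ, sum_apply]
    exact Finset.sum_eq_zero fun i _ => H i (mem_ker_pow_of_comp_eq (hproj i) hx)

end LinearMap

theorem stmt7_general (K : Type*) [Field K]
    (V : Type*) [AddCommGroup V] [Module K V]
    (b : V →ₗ[K] V →ₗ[K] K)
    (u : Module.End K V)
    (t : ℕ) (U : Fin t → Submodule K V)
    (hint : DirectSum.IsInternal U)
    (horth : ∀ i j, i ≠ j → ∀ x ∈ U i, ∀ y ∈ U j, b x y = 0)
    (ut : Module.End K (SymSq K V))
    (hut : ∀ x y : V, ut (SymSq.mul x y) = SymSq.mul (u x) (u y))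
    (φ : SymSq K V →ₗ[K] K)
    (hφ : ∀ x y : V, φ (SymSq.mul x y) = b x y)
    (ui : ∀ i, Module.End K ↥(U i))
    (hui : ∀ i (x : ↥(U i)), (↑(ui i x) : V) = u ↑x)
    (uti : ∀ i, Module.End K (SymSq K ↥(U i)))
    (huti : ∀ i (x y : ↥(U i)), uti i (SymSq.mul x y) = SymSq.mul (ui i x) (ui i y))
    (φi : ∀ i, SymSq K ↥(U i) →ₗ[K] K)
    (hφi : ∀ i (x y : ↥(U i)), φi i (SymSq.mul x y) = b ↑x ↑y) :
    ∀ m : ℕ,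
      LinearMap.ker ((ut - 1) ^ m) ≤ LinearMap.ker φ ↔
        ∀ i, LinearMap.ker ((uti i - 1) ^ m) ≤ LinearMap.ker (φi i) := by
  refine LinearMap.ker_pow_le_ker_iff_of_decomposition _ _ φ φi
    (fun i => SymSq.map (U i).subtype) (fun i => SymSq.map (hint.proj i))
    (fun i => SymSq.linearMap_ext fun x y => ?_) (fun i => SymSq.linearMap_ext fun x y => ?_)
    (fun i => SymSq.linearMap_ext fun x y => ?_) (SymSq.linearMap_ext fun x y => ?_)
  · simp [hut, huti, hui]
  · simp [hut, huti, hint.proj_apply_of_restrict hui]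
  · simp [hφ, hφi]
  · simp [hφ, hφi, hint.bilin_eq_sum_proj horth x y]

/-- For unipotent `u ∈ Sp(V)` and an orthogonal decomposition `V = U₁ ⊥ ⋯ ⊥ U_t` into
nondegenerate `u`-invariant subspaces: `ker(ũ - 1)^m ⊆ ker φ` if and only if
`ker(ũᵢ - 1)^m ⊆ ker φᵢ` for all `i`. -/
theorem stmt7 (K : Type*) [Field K] [IsAlgClosed K] [CharP K 2]
    (V : Type*) [AddCommGroup V] [Module K V] [FiniteDimensional K V]
    (b : V →ₗ[K] V →ₗ[K] K)
    (halt : ∀ v : V, b v v = 0)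
    (hnd : ∀ v : V, (∀ w : V, b v w = 0) → v = 0)
    (u : Module.End K V)
    (hSp : ∀ v w : V, b (u v) (u w) = b v w)
    (hunip : IsNilpotent (u - 1))
    (t : ℕ) (U : Fin t → Submodule K V)
    (hint : DirectSum.IsInternal U)
    (horth : ∀ i j, i ≠ j → ∀ x ∈ U i, ∀ y ∈ U j, b x y = 0)
    (hndU : ∀ i, ∀ x ∈ U i, (∀ y ∈ U i, b x y = 0) → x = 0)
    (hinv : ∀ i, ∀ x ∈ U i, u x ∈ U i)
    (ut : Module.End K (SymSq K V))
    (hut : ∀ x y : V, ut (SymSq.mul x y) = SymSq.mul (u x) (u y))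
    (φ : SymSq K V →ₗ[K] K)
    (hφ : ∀ x y : V, φ (SymSq.mul x y) = b x y)
    (ui : ∀ i, Module.End K ↥(U i))
    (hui : ∀ i (x : ↥(U i)), (↑(ui i x) : V) = u ↑x)
    (uti : ∀ i, Module.End K (SymSq K ↥(U i)))
    (huti : ∀ i (x y : ↥(U i)), uti i (SymSq.mul x y) = SymSq.mul (ui i x) (ui i y))
    (φi : ∀ i, SymSq K ↥(U i) →ₗ[K] K)
    (hφi : ∀ i (x y : ↥(U i)), φi i (SymSq.mul x y) = b ↑x ↑y) :
    ∀ m : ℕ,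
      LinearMap.ker ((ut - 1) ^ m) ≤ LinearMap.ker φ ↔
        ∀ i, LinearMap.ker ((uti i - 1) ^ m) ≤ LinearMap.ker (φi i) :=
  stmt7_general K V b u t U hint horth ut hut φ hφ ui hui uti huti φi hφi
end

section
/- Let K be an algebraically closed field of characteristic 2, let ℓ ≥ 1, n = 2ℓ, and let V be the K-vector space with basis v_1, …, v_n equipped with the alternating bilinear form b with b(v_i, v_j) = 1 if i + j = n + 1 and b(v_i, v_j) = 0 otherwise. Let u be the linear map with u v_1 = v_1, u v_i = v_i + v_{i−1} + ⋯ + v_1 for 1 < i ≤ ℓ + 1, and u v_i = v_i + v_{i−1} for ℓ + 1 < i ≤ n (so u ∈ Sp(V)). Set γ = Σ_{i=1}^{ℓ} v_i v_{n+1−i} ∈ S²(V) and let ũ be the map induced by u on S²(V). Then ũ(γ) = γ + Σ_{i=1}^{ℓ} v_i², and the element γ + v_{ℓ+1}² is fixed by ũ. -/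
open scoped TensorProduct

section Aux

variable {K V : Type*} [Field K] [AddCommGroup V] [Module K V]

noncomputable def SymSq.mulMap : V →ₗ[K] V →ₗ[K] SymSq K V :=
  (TensorProduct.mk K V V).compr₂ (Submodule.mkQ _)

lemma SymSq.mulMap_apply (x y : V) : (SymSq.mulMap x y : SymSq K V) = SymSq.mul x y := rfl

lemma SymSq.mul_addl (x x' y : V) :
    SymSq.mul (K := K) (x + x') y = SymSq.mul x y + SymSq.mul x' y := by
  simp [← SymSq.mulMap_apply, map_add]

lemma SymSq.mul_addr (x y y' : V) :
    SymSq.mul (K := K) x (y + y') = SymSq.mul x y + SymSq.mul x y' := by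
  simp [← SymSq.mulMap_apply, map_add]

lemma SymSq.mul_zerol (y : V) : SymSq.mul (K := K) 0 y = 0 := by
  simp [← SymSq.mulMap_apply]

lemma SymSq.mul_comm' (x y : V) : SymSq.mul (K := K) x y = SymSq.mul y x := by
  unfold SymSq.mul
  rw [Submodule.Quotient.eq]
  exact Submodule.subset_span ⟨x, y, rfl⟩

lemma SymSq.add_self [CharP K 2] (z : SymSq K V) : z + z = 0 := by
  have h2 : (2 : K) = 0 := by
    have := CharP.cast_eq_zero K 2
    exact_mod_cast this
  calc z + z = (2 : K) • z := (two_smul K z).symm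
    _ = 0 := by rw [h2, zero_smul]

lemma SymSq.cancel2 [CharP K 2] (a c : SymSq K V) : (c + a) + c = a := by
  have h := SymSq.add_self (K := K) c
  calc (c + a) + c = a + (c + c) := by abel
    _ = a := by rw [h, add_zero]

lemma SymSq.diag [CharP K 2] (v : ℕ → V) (n : ℕ) :
    SymSq.mul (K := K) (∑ j ∈ Finset.range n, v j) (∑ j ∈ Finset.range n, v j)
      = ∑ j ∈ Finset.range n, SymSq.mul (v j) (v j) := by
  induction n with
  | zero => simpa using SymSq.mul_zerol (K := K) (0 : V)
  | succ n ih =>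
    rw [Finset.sum_range_succ, Finset.sum_range_succ, SymSq.mul_addl, SymSq.mul_addr,
      SymSq.mul_addr, ih, SymSq.mul_comm' (v n) (∑ j ∈ Finset.range n, v j)]
    have h := SymSq.add_self (K := K) (SymSq.mul (∑ j ∈ Finset.range n, v j) (v n))
    set S := ∑ j ∈ Finset.range n, SymSq.mul (K := K) (v j) (v j)
    set c := SymSq.mul (K := K) (∑ j ∈ Finset.range n, v j) (v n)
    set d := SymSq.mul (K := K) (v n) (v n)
    calc (S + c) + (c + d) = (S + d) + (c + c) := by abel
      _ = S + d := by rw [h, add_zero]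

end Aux

/-- Lemma: for the regular unipotent `u` on `V = V(2ℓ)` (given in the standard symplectic
basis `v_0, …, v_{2ℓ-1}`, 0-indexed) and `γ = Σ_{i<ℓ} v_i v_{2ℓ-1-i} ∈ S²(V)`, we have
`ũ γ = γ + Σ_{i<ℓ} v_i²`, and `γ + v_ℓ²` is fixed by `ũ`. -/
theorem stmt8 (K : Type*) [Field K] [IsAlgClosed K] [CharP K 2]
    (ℓ : ℕ) (hl : 1 ≤ ℓ)
    (v : ℕ → (Fin (2 * ℓ) → K))
    (hv : ∀ i : Fin (2 * ℓ), v (i : ℕ) = Pi.single i 1)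
    (b : (Fin (2 * ℓ) → K) →ₗ[K] (Fin (2 * ℓ) → K) →ₗ[K] K)
    (hb : ∀ n n' : ℕ, n < 2 * ℓ → n' < 2 * ℓ →
      b (v n) (v n') = if n + n' = 2 * ℓ - 1 then 1 else 0)
    (u : Module.End K (Fin (2 * ℓ) → K))
    (hu1 : ∀ n : ℕ, n ≤ ℓ → u (v n) = ∑ j ∈ Finset.range (n + 1), v j)
    (hu2 : ∀ n : ℕ, ℓ < n → n < 2 * ℓ → u (v n) = v n + v (n - 1))
    (ut : Module.End K (SymSq K (Fin (2 * ℓ) → K)))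
    (hut : ∀ x y : Fin (2 * ℓ) → K, ut (SymSq.mul x y) = SymSq.mul (u x) (u y))
    (γ : SymSq K (Fin (2 * ℓ) → K))
    (hγ : γ = ∑ i ∈ Finset.range ℓ, SymSq.mul (v i) (v (2 * ℓ - 1 - i))) :
    (ut γ = γ + ∑ i ∈ Finset.range ℓ, SymSq.mul (v i) (v i)) ∧
      ut (γ + SymSq.mul (v ℓ) (v ℓ)) = γ + SymSq.mul (v ℓ) (v ℓ) := by
  clear hv hb
  obtain ⟨L, rfl⟩ : ∃ L, ℓ = L + 1 := ⟨ℓ - 1, by omega⟩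
  set B : ℕ → (Fin (2 * (L + 1)) → K) := fun k => ∑ j ∈ Finset.range k, v j with hB
  set F : ℕ → SymSq K (Fin (2 * (L + 1)) → K) :=
    fun i => SymSq.mul (B (i + 1)) (v (2 * (L + 1) - 1 - i)) with hF
  set G : ℕ → SymSq K (Fin (2 * (L + 1)) → K) :=
    fun i => SymSq.mul (B i) (v (2 * (L + 1) - 1 - i)) with hG
  set D : SymSq K (Fin (2 * (L + 1)) → K) :=
    ∑ j ∈ Finset.range (L + 1), SymSq.mul (v j) (v j) with hD
  have hBsucc : ∀ k, B (k + 1) = B k + v k := fun k => Finset.sum_range_succ _ _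
  -- γ as a telescoping sum
  have hγ' : γ = (∑ i ∈ Finset.range (L + 1), F i) + ∑ i ∈ Finset.range (L + 1), G i := by
    rw [hγ, ← Finset.sum_add_distrib]
    refine Finset.sum_congr rfl fun i _ => ?_
    have h1 : F i = G i + SymSq.mul (v i) (v (2 * (L + 1) - 1 - i)) := by
      simp only [hF, hG, hBsucc i, SymSq.mul_addl]
    rw [h1]
    exact (SymSq.cancel2 _ _).symm
  -- per-term computation of ut γ
  have hutγ : ut γ
      = ∑ i ∈ Finset.range (L + 1), SymSq.mul (u (v i)) (u (v (2 * (L + 1) - 1 - i))) := by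
    rw [hγ, map_sum]
    exact Finset.sum_congr rfl fun i _ => hut _ _
  have hterm : ∀ i ∈ Finset.range L,
      SymSq.mul (u (v i)) (u (v (2 * (L + 1) - 1 - i))) = F i + G (i + 1) := by
    intro i hi
    rw [Finset.mem_range] at hi
    have h1 : u (v i) = B (i + 1) := hu1 i (by omega)
    have h2 : u (v (2 * (L + 1) - 1 - i))
        = v (2 * (L + 1) - 1 - i) + v (2 * (L + 1) - 1 - (i + 1)) := by
      exact hu2 (2 * (L + 1) - 1 - i) (by omega) (by omega)
    rw [h1, h2, SymSq.mul_addr]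
  have hlast : SymSq.mul (u (v L)) (u (v (2 * (L + 1) - 1 - L))) = F L + D := by
    have e : 2 * (L + 1) - 1 - L = L + 1 := by omega
    have h1 : u (v L) = B (L + 1) := hu1 L (by omega)
    have h2 : u (v (L + 1)) = B (L + 2) := hu1 (L + 1) le_rfl
    rw [e, h1, h2, hBsucc (L + 1), SymSq.mul_addr]
    simp only [hF, hG, hD, hB, e]
    rw [SymSq.diag v (L + 1)]
    abel
  have key1 : ut γ = γ + D := by
    rw [hutγ, Finset.sum_range_succ, Finset.sum_congr rfl hterm, hlast,
      Finset.sum_add_distrib]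
    have hG0 : G 0 = 0 := by
      simp only [hG, hB]
      simpa using SymSq.mul_zerol (K := K) (v (2 * (L + 1) - 1 - 0))
    have hGs : ∑ i ∈ Finset.range L, G (i + 1) = ∑ i ∈ Finset.range (L + 1), G i := by
      rw [Finset.sum_range_succ' G L, hG0, add_zero]
    rw [hGs, hγ', Finset.sum_range_succ F L]
    abel
  refine ⟨key1, ?_⟩
  rw [map_add, key1, hut, hu1 (L + 1) le_rfl, SymSq.diag, Finset.sum_range_succ]
  have h := SymSq.add_self (K := K) D
  set q := SymSq.mul (K := K) (v (L + 1)) (v (L + 1))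
  calc γ + D + (D + q) = (γ + q) + (D + D) := by abel
    _ = γ + q := by rw [h, add_zero]
end

section
/- Let (V, b) be a finite-dimensional symplectic vector space over an algebraically closed field K of characteristic 2 and let e ∈ sp(V) be nilpotent. Suppose V = U_1 ⊕ ⋯ ⊕ U_t where the U_i are pairwise b-orthogonal nondegenerate e-invariant subspaces. Let ẽ denote the map induced by e on S²(V), let ẽ_i denote the map induced by the restriction of e on S²(U_i), let φ : S²(V) → K be determined by φ(xy) = b(x, y), and let φ_i : S²(U_i) → K be determined by the restriction of b. Then for every integer m ≥ 0: ker(ẽ^m) ⊆ ker φ if and only if ker(ẽ_i^m) ⊆ ker φ_i for all 1 ≤ i ≤ t. -/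
open scoped TensorProduct
open scoped DirectSum

/-- Functoriality of the symmetric square. -/
noncomputable def symSqMap {K V W : Type*} [Field K] [AddCommGroup V] [Module K V]
    [AddCommGroup W] [Module K W] (f : V →ₗ[K] W) : SymSq K V →ₗ[K] SymSq K W :=
  Submodule.mapQ _ _ (TensorProduct.map f f) (by
    rw [Submodule.span_le]
    rintro z ⟨x, y, rfl⟩
    simp only [SetLike.mem_coe, Submodule.mem_comap]
    refine Submodule.subset_span ⟨f x, f y, ?_⟩
    simp)

lemma symSqMap_mul {K V W : Type*} [Field K] [AddCommGroup V] [Module K V]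
    [AddCommGroup W] [Module K W] (f : V →ₗ[K] W) (x y : V) :
    symSqMap f (SymSq.mul x y) = SymSq.mul (f x) (f y) := by
  simp only [symSqMap, SymSq.mul, Submodule.mapQ_apply, TensorProduct.map_tmul]

lemma symSq_hom_ext {K V M : Type*} [Field K] [AddCommGroup V] [Module K V]
    [AddCommGroup M] [Module K M] {f g : SymSq K V →ₗ[K] M}
    (h : ∀ x y : V, f (SymSq.mul x y) = g (SymSq.mul x y)) : f = g := by
  refine LinearMap.ext fun z => ?_
  obtain ⟨w, rfl⟩ := Submodule.Quotient.mk_surjective _ z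
  induction w using TensorProduct.induction_on with
  | zero =>
      have : (Submodule.Quotient.mk (0 : TensorProduct K V V) : SymSq K V) = 0 := rfl
      rw [this, map_zero, map_zero]
  | tmul x y => exact h x y
  | add a c ha hc =>
      have : (Submodule.Quotient.mk (a + c) : SymSq K V)
          = Submodule.Quotient.mk a + Submodule.Quotient.mk c := rfl
      rw [this, map_add, map_add, ha, hc]

lemma pow_comm_point {K M N : Type*} [Field K] [AddCommGroup M] [Module K M]
    [AddCommGroup N] [Module K N] (f : Module.End K M) (g : Module.End K N)
    (ι : M →ₗ[K] N) (h : ∀ z, ι (f z) = g (ι z)) (m : ℕ) :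
    ∀ z, ι ((f ^ m) z) = (g ^ m) (ι z) := by
  induction m with
  | zero => intro z; simp
  | succ m ih =>
      intro z
      rw [pow_succ, pow_succ, Module.End.mul_apply, Module.End.mul_apply, ← h]
      exact ih (f z)

set_option maxHeartbeats 1000000 in
/-- For nilpotent `e ∈ sp(V)` and an orthogonal decomposition `V = U₁ ⊥ ⋯ ⊥ U_t` into
nondegenerate `e`-invariant subspaces: `ker(ẽ^m) ⊆ ker φ` if and only if
`ker(ẽᵢ^m) ⊆ ker φᵢ` for all `i`. -/
theorem stmt12 (K : Type*) [Field K] [IsAlgClosed K] [CharP K 2]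
    (V : Type*) [AddCommGroup V] [Module K V] [FiniteDimensional K V]
    (b : V →ₗ[K] V →ₗ[K] K)
    (halt : ∀ v : V, b v v = 0)
    (hnd : ∀ v : V, (∀ w : V, b v w = 0) → v = 0)
    (e : Module.End K V)
    (hsp : ∀ v w : V, b (e v) w + b v (e w) = 0)
    (hnil : IsNilpotent e)
    (t : ℕ) (U : Fin t → Submodule K V)
    (hint : DirectSum.IsInternal U)
    (horth : ∀ i j, i ≠ j → ∀ x ∈ U i, ∀ y ∈ U j, b x y = 0)
    (hndU : ∀ i, ∀ x ∈ U i, (∀ y ∈ U i, b x y = 0) → x = 0)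
    (hinv : ∀ i, ∀ x ∈ U i, e x ∈ U i)
    (et : Module.End K (SymSq K V))
    (het : ∀ x y : V, et (SymSq.mul x y) = SymSq.mul (e x) y + SymSq.mul x (e y))
    (φ : SymSq K V →ₗ[K] K)
    (hφ : ∀ x y : V, φ (SymSq.mul x y) = b x y)
    (ei : ∀ i, Module.End K ↥(U i))
    (hei : ∀ i (x : ↥(U i)), (↑(ei i x) : V) = e ↑x)
    (eti : ∀ i, Module.End K (SymSq K ↥(U i)))
    (heti : ∀ i (x y : ↥(U i)),
      eti i (SymSq.mul x y) = SymSq.mul (ei i x) y + SymSq.mul x (ei i y))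
    (φi : ∀ i, SymSq K ↥(U i) →ₗ[K] K)
    (hφi : ∀ i (x y : ↥(U i)), φi i (SymSq.mul x y) = b ↑x ↑y) :
    ∀ m : ℕ,
      LinearMap.ker (et ^ m) ≤ LinearMap.ker φ ↔
        ∀ i, LinearMap.ker (eti i ^ m) ≤ LinearMap.ker (φi i) := by
  classical
  -- the equivalence coming from the internal direct sum
  set E : (⨁ i, ↥(U i)) ≃ₗ[K] V :=
    LinearEquiv.ofBijective (DirectSum.coeLinearMap U) hint with hE
  -- the projections onto the summands
  set q : ∀ i, V →ₗ[K] ↥(U i) := fun i =>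
    (DirectSum.component K (Fin t) (fun i => ↥(U i)) i) ∘ₗ E.symm.toLinearMap with hq
  have hq_apply : ∀ i (v : V), q i v = E.symm v i := fun i v => rfl
  have hq_mem : ∀ i (x : V) (hx : x ∈ U i), q i x = ⟨x, hx⟩ := by
    intro i x hx
    rw [hq_apply]
    exact hint.ofBijective_coeLinearMap_of_mem hx
  have hq_ne : ∀ i j, i ≠ j → ∀ (x : V), x ∈ U i → q j x = 0 := by
    intro i j hij x hx
    rw [hq_apply]
    exact hint.ofBijective_coeLinearMap_of_mem_ne hij hx
  have hsum : ∀ v : V, ∑ i, (↑(q i v) : V) = v := by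
    intro v
    have h1 : ∑ i, DirectSum.of (fun i => ↥(U i)) i (E.symm v i) = E.symm v :=
      DirectSum.sum_univ_of (E.symm v)
    have h2 := congrArg (DirectSum.coeLinearMap U) h1
    rw [map_sum] at h2
    simp only [DirectSum.coeLinearMap_of] at h2
    have h3 : DirectSum.coeLinearMap U (E.symm v) = E (E.symm v) := rfl
    rw [h3, E.apply_symm_apply] at h2
    exact h2
  -- the projections commute with `e`
  have hqe : ∀ i (v : V), q i (e v) = ei i (q i v) := by
    intro i v
    have hcoe : (↑(q i (e v)) : V) = e ↑(q i v) := by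
      conv_lhs => rw [← hsum v, map_sum, map_sum]
      rw [AddSubmonoidClass.coe_finset_sum, Finset.sum_eq_single i]
      · rw [hq_mem i (e ↑(q i v)) (hinv i _ (q i v).2)]
      · intro j _ hj
        rw [hq_ne j i hj _ (hinv j _ (q j v).2), ZeroMemClass.coe_zero]
      · intro h; exact absurd (Finset.mem_univ i) h
    ext
    rw [hcoe, hei]
  -- the induced maps on symmetric squares
  set ιm : ∀ i, SymSq K ↥(U i) →ₗ[K] SymSq K V := fun i => symSqMap (U i).subtype with hιm
  set Pm : ∀ i, SymSq K V →ₗ[K] SymSq K ↥(U i) := fun i => symSqMap (q i) with hPm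
  -- intertwining relations
  have h1 : ∀ i, et ∘ₗ ιm i = ιm i ∘ₗ eti i := by
    intro i
    apply symSq_hom_ext
    intro x y
    simp only [LinearMap.comp_apply, hιm, symSqMap_mul, Submodule.coe_subtype, het, heti,
      map_add, hei]
  have h2 : ∀ i, Pm i ∘ₗ et = eti i ∘ₗ Pm i := by
    intro i
    apply symSq_hom_ext
    intro x y
    simp only [LinearMap.comp_apply, hPm, symSqMap_mul, het, heti, map_add, hqe]
  have h1' : ∀ i m (z : SymSq K ↥(U i)), (et ^ m) (ιm i z) = ιm i ((eti i ^ m) z) := by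
    intro i m z
    exact (pow_comm_point (eti i) et (ιm i)
      (fun z => by rw [← LinearMap.comp_apply, ← h1 i]; rfl) m z).symm
  have h2' : ∀ i m (z : SymSq K V), Pm i ((et ^ m) z) = (eti i ^ m) (Pm i z) := by
    intro i m z
    exact pow_comm_point et (eti i) (Pm i)
      (fun z => by rw [← LinearMap.comp_apply, h2 i]; rfl) m z
  -- compatibility with the forms
  have h3 : ∀ i (z : SymSq K ↥(U i)), φ (ιm i z) = φi i z := by
    intro i
    have : φ ∘ₗ ιm i = φi i := by
      apply symSq_hom_ext
      intro x y
      simp only [LinearMap.comp_apply, hιm, symSqMap_mul, Submodule.coe_subtype, hφ, hφi]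
    intro z
    rw [← this]; rfl
  have h4 : ∀ z : SymSq K V, φ z = ∑ i, φi i (Pm i z) := by
    have : φ = ∑ i, (φi i) ∘ₗ (Pm i) := by
      apply symSq_hom_ext
      intro x y
      rw [LinearMap.sum_apply]
      simp only [LinearMap.comp_apply, hPm, symSqMap_mul, hφ, hφi]
      conv_lhs => rw [← hsum x, ← hsum y]
      simp only [map_sum, LinearMap.sum_apply]
      refine Finset.sum_congr rfl fun i _ => Finset.sum_eq_single i
        (fun j _ hj => horth j i hj _ (q j x).2 _ (q i y).2)
        (fun h => absurd (Finset.mem_univ i) h)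
    intro z
    rw [this, LinearMap.sum_apply]
    rfl
  intro m
  constructor
  · intro h i z hz
    have hz0 : (eti i ^ m) z = 0 := hz
    have : (et ^ m) (ιm i z) = 0 := by rw [h1' i m z, hz0, map_zero]
    have := h this
    rw [LinearMap.mem_ker, ← h3 i z]
    exact this
  · intro h z hz
    have hz0 : (et ^ m) z = 0 := hz
    rw [LinearMap.mem_ker, h4 z]
    apply Finset.sum_eq_zero
    intro i _
    have : (eti i ^ m) (Pm i z) = 0 := by rw [← h2' i m z, hz0, map_zero]
    exact h i this
end
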